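/- arXiv:1809.06099 — 4 statements merged into one kernel-verified Lean document; each statement's English description precedes it below -/
import Mathlib

section
/- Let d ≥ 4 and m ∈ {2,...,d−2}, and let C be an m-dimensional copula that is m-countermonotonic. Define D(u,v) := C(u)·∏_{i=1}^{d−m} v_i and E(u,v) := C(u)·min{v_1,...,v_{d−m}} for u ∈ [0,1]^m and v ∈ [0,1]^{d−m}. Then D and E are d-dimensional copulas, both are {1,...,m}-countermonotonic, and D ⪯ E with D ≠ E; in particular, E is a {1,...,m}-countermonotonic copula that is not a minimal copula. -/
open MeasureTheory unitInterval

/-- The unit cube `[0,1]^d`, modelled as functions `Fin d → [0,1]`. -/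
abbrev Cube (d : ℕ) : Type := Fin d → unitInterval

/-- `η_K(u,v)`: the vector whose `k`-th coordinate is `v k` if `k ∈ K` and `u k` otherwise. -/
def etaK {d : ℕ} (K : Finset (Fin d)) (u v : Cube d) : Cube d :=
  fun k => if k ∈ K then v k else u k

/-- `C` is a `d`-dimensional copula. -/
def IsCopula {d : ℕ} (C : Cube d → ℝ) : Prop :=
  (∀ u v : Cube d, u ≤ v →
      0 ≤ ∑ K : Finset (Fin d), (-1 : ℝ) ^ (d - K.card) * C (etaK K u v)) ∧
  (∀ k : Fin d, ∀ u : Cube d, C (etaK {k} u 0) = 0) ∧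
  (∀ k : Fin d, ∀ u : Cube d, C (etaK {k} 1 u) = (u k : ℝ))

/-- The reflection `ν_K`, i.e. the composition of the commuting reflections `ν_k`, `k ∈ K`,
written in closed (inclusion–exclusion) form: the coordinates in `L ⊆ K` are reflected to
`1 - u k`, the remaining coordinates of `K` are set to `1`. -/
noncomputable def nuK {d : ℕ} (K : Finset (Fin d)) (C : Cube d → ℝ) : Cube d → ℝ :=
  fun u => ∑ L ∈ K.powerset, (-1 : ℝ) ^ L.card *
    C (fun k => if k ∈ L then unitInterval.symm (u k) else if k ∈ K then 1 else u k)

/-- The total reflection `τ = ν_{{1,...,d}}`, sending a copula to its survival copula. -/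
noncomputable def survival {d : ℕ} (C : Cube d → ℝ) : Cube d → ℝ := nuK Finset.univ C

/-- The concordance order `C ⪯ D`: `C(u) ≤ D(u)` and `(τ C)(u) ≤ (τ D)(u)` for all `u`. -/
def ConcLE {d : ℕ} (C D : Cube d → ℝ) : Prop :=
  (∀ u, C u ≤ D u) ∧ (∀ u, survival C u ≤ survival D u)

/-- A minimal copula: a minimal element of the set of all copulas w.r.t. concordance order. -/
def IsMinimalCopula {d : ℕ} (C : Cube d → ℝ) : Prop :=
  IsCopula C ∧ ∀ D : Cube d → ℝ, IsCopula D → ConcLE D C → D = C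

/-- `μ` is the copula measure `Q^C` of `C`: a Borel probability measure on the cube
with `μ [0,u] = C u` for all `u`. -/
def IsCopulaMeasure {d : ℕ} (C : Cube d → ℝ) (μ : Measure (Cube d)) : Prop :=
  IsProbabilityMeasure μ ∧ ∀ u : Cube d, μ (Set.Icc 0 u) = ENNReal.ofReal (C u)

/-- `C` is `K`-countermonotonic: there are strictly increasing continuous functions
`g k : [0,1] → ℝ` (`k ∈ K`) and `c : ℝ` with `Q^C {u : ∑ k ∈ K, g k (u k) = c} = 1`. -/
def IsKCM {d : ℕ} (K : Finset (Fin d)) (C : Cube d → ℝ) : Prop :=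
  ∃ (g : Fin d → unitInterval → ℝ) (c : ℝ),
    (∀ k ∈ K, StrictMono (g k) ∧ Continuous (g k)) ∧
    ∃ μ : Measure (Cube d), IsCopulaMeasure C μ ∧
      μ {u : Cube d | ∑ k ∈ K, g k (u k) = c} = 1

/-- `C` is Kendall-countermonotonic (`τ`-CM):
`min (C u) ((τ C)(1 - u)) = 0` for every `u` with `0 < u < 1` coordinatewise. -/
noncomputable def IsTauCM {d : ℕ} (C : Cube d → ℝ) : Prop :=
  ∀ u : Cube d, (∀ k, 0 < u k ∧ u k < 1) →
    min (C u) (survival C (fun k => unitInterval.symm (u k))) = 0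

/-- The upper Fréchet–Hoeffding bound `M(u) = min {u_1, ..., u_d}`. -/
noncomputable def Mcop {d : ℕ} : Cube d → ℝ :=
  fun u => sInf (Set.range fun k => (u k : ℝ))

noncomputable def boxSum {n : ℕ} (F : Cube n → ℝ) (u v : Cube n) : ℝ :=
  ∑ K : Finset (Fin n), (-1 : ℝ) ^ (n - K.card) * F (etaK K u v)

lemma signed_prod {n : ℕ} (a b : Fin n → ℝ) :
    ∑ K : Finset (Fin n), (-1 : ℝ) ^ (n - K.card) * ∏ j, (if j ∈ K then b j else a j)
      = ∏ j, (b j - a j) := by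
  have h := Finset.prod_add b (fun j => -a j) Finset.univ
  simp only [Finset.powerset_univ] at h
  have h2 : ∀ j ∈ Finset.univ, b j - a j = b j + (-a j) := fun j _ => by ring
  rw [Finset.prod_congr rfl h2, h]
  refine Finset.sum_congr rfl fun K _ => ?_
  have hsd : Finset.univ \ K = Kᶜ := (Finset.compl_eq_univ_sdiff K).symm
  have hneg : ∏ j ∈ Kᶜ, (-a j) = (-1 : ℝ) ^ (n - K.card) * ∏ j ∈ Kᶜ, a j := by
    have : ∀ j ∈ Kᶜ, (-a j) = (-1 : ℝ) * a j := fun j _ => by ring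
    rw [Finset.prod_congr rfl this, Finset.prod_mul_distrib, Finset.prod_const,
      Finset.card_compl, Fintype.card_fin]
  have hsplit : ∏ j, (if j ∈ K then b j else a j)
      = (∏ j ∈ K, b j) * ∏ j ∈ Kᶜ, a j := by
    rw [← Finset.prod_mul_prod_compl K (fun j => if j ∈ K then b j else a j)]
    congr 1
    · exact Finset.prod_congr rfl fun j hj => by simp [hj]
    · exact Finset.prod_congr rfl fun j hj => by
        simp [Finset.mem_compl.mp hj]
  rw [hsd, hneg, hsplit]; ring

lemma copula_zero {n : ℕ} {C : Cube n → ℝ} (hC : IsCopula C) {w : Cube n} {k : Fin n}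
    (hk : w k = 0) : C w = 0 := by
  have := hC.2.1 k w
  have hw : etaK {k} w 0 = w := by
    funext j
    simp only [etaK, Finset.mem_singleton]
    split
    · next h => subst h; exact hk.symm
    · rfl
  rwa [hw] at this

lemma copula_one {n : ℕ} [NeZero n] {C : Cube n → ℝ} (hC : IsCopula C) : C 1 = 1 := by
  have := hC.2.2 ⟨0, Nat.pos_of_ne_zero (NeZero.ne n)⟩ 1
  have hw : etaK {(⟨0, Nat.pos_of_ne_zero (NeZero.ne n)⟩ : Fin n)} 1 1 = 1 := by
    funext j; simp [etaK]
  rw [hw] at this; rw [this]; rfl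

lemma boxSum_zero_left {n : ℕ} {C : Cube n → ℝ} (hC : IsCopula C) (u : Cube n) :
    boxSum C 0 u = C u := by
  unfold boxSum
  rw [Finset.sum_eq_single Finset.univ]
  · have : etaK Finset.univ (0 : Cube n) u = u := by funext j; simp [etaK]
    simp [this, Finset.card_univ]
  · intro K _ hK
    obtain ⟨k, hk⟩ : ∃ k, k ∉ K := by
      by_contra h
      push_neg at h
      exact hK (Finset.eq_univ_iff_forall.mpr h)
    have : C (etaK K (0 : Cube n) u) = 0 :=
      copula_zero hC (k := k) (by simp [etaK, hk])
    simp [this]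
  · intro h; exact absurd (Finset.mem_univ _) h

lemma copula_nonneg {n : ℕ} {C : Cube n → ℝ} (hC : IsCopula C) (u : Cube n) :
    0 ≤ C u := by
  rw [← boxSum_zero_left hC u]
  exact hC.1 0 u (fun k => unitInterval.nonneg')

lemma survival_eq_boxSum {n : ℕ} (C : Cube n → ℝ) (w : Cube n) :
    survival C w = boxSum C (fun k => unitInterval.symm (w k)) 1 := by
  unfold survival nuK boxSum
  rw [Finset.powerset_univ]
  have hbij : Function.Bijective (fun K : Finset (Fin n) => Kᶜ) :=
    Function.Involutive.bijective (fun K => compl_compl K)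
  rw [← Fintype.sum_bijective _ hbij _ _ ?_]
  intro K
  have hcard : Kᶜ.card = n - K.card := by
    rw [Finset.card_compl, Fintype.card_fin]
  congr 1
  · rw [hcard]
  · congr 1
    funext k
    by_cases h : k ∈ K <;> simp [etaK, h, Finset.mem_compl]

lemma survival_nonneg {n : ℕ} {C : Cube n → ℝ} (hC : IsCopula C) (w : Cube n) :
    0 ≤ survival C w := by
  rw [survival_eq_boxSum]
  exact hC.1 _ 1 (fun k => unitInterval.le_one')
noncomputable def Mn {n : ℕ} (w : Cube n) : ℝ := sInf (Set.range fun j => (w j : ℝ))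

lemma Mn_le {n : ℕ} [NeZero n] (w : Cube n) (j : Fin n) : Mn w ≤ (w j : ℝ) :=
  csInf_le (Set.Finite.bddBelow (Set.finite_range _)) ⟨j, rfl⟩

lemma le_Mn {n : ℕ} [NeZero n] (w : Cube n) {c : ℝ} (h : ∀ j, c ≤ (w j : ℝ)) :
    c ≤ Mn w :=
  le_csInf (Set.range_nonempty _) (by rintro x ⟨j, rfl⟩; exact h j)

lemma Mn_mem {n : ℕ} [NeZero n] (w : Cube n) : ∃ j, Mn w = (w j : ℝ) := by
  have := Set.Nonempty.csInf_mem (Set.range_nonempty fun j => (w j : ℝ))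
    (Set.finite_range _)
  obtain ⟨j, hj⟩ := this
  exact ⟨j, hj.symm⟩

lemma Mn_nonneg {n : ℕ} [NeZero n] (w : Cube n) : 0 ≤ Mn w :=
  le_Mn w fun j => (w j).2.1

lemma Mn_le_one {n : ℕ} [NeZero n] (w : Cube n) : Mn w ≤ 1 := by
  obtain ⟨j, hj⟩ := Mn_mem w
  rw [hj]; exact (w j).2.2

lemma prod_le_Mn {n : ℕ} [NeZero n] (w : Cube n) :
    ∏ j, (w j : ℝ) ≤ Mn w := by
  refine le_Mn w fun j => ?_
  rw [← Finset.mul_prod_erase Finset.univ _ (Finset.mem_univ j)]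
  have h1 : ∏ i ∈ Finset.univ.erase j, (w i : ℝ) ≤ 1 :=
    Finset.prod_le_one (fun i _ => (w i).2.1) (fun i _ => (w i).2.2)
  have h0 : (0:ℝ) ≤ ∏ i ∈ Finset.univ.erase j, (w i : ℝ) :=
    Finset.prod_nonneg fun i _ => (w i).2.1
  calc (w j : ℝ) * ∏ i ∈ Finset.univ.erase j, (w i : ℝ)
      ≤ (w j : ℝ) * 1 := mul_le_mul_of_nonneg_left h1 (w j).2.1
    _ = (w j : ℝ) := mul_one _
section Split
variable {d m n : ℕ}

def e1 (hmn : m + n = d) (i : Fin m) : Fin d := ⟨i.1, by omega⟩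
def e2 (hmn : m + n = d) (j : Fin n) : Fin d := ⟨m + j.1, by omega⟩

def PhiS (hmn : m + n = d) (K : Finset (Fin d)) : Finset (Fin m) × Finset (Fin n) :=
  (Finset.univ.filter (fun i => e1 hmn i ∈ K), Finset.univ.filter (fun j => e2 hmn j ∈ K))

def PsiS (hmn : m + n = d) (P : Finset (Fin m) × Finset (Fin n)) : Finset (Fin d) :=
  Finset.univ.filter (fun k =>
    if h : (k : ℕ) < m then (⟨k.1, h⟩ : Fin m) ∈ P.1
    else (⟨k.1 - m, by omega⟩ : Fin n) ∈ P.2)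

lemma PsiS_PhiS (hmn : m + n = d) (K : Finset (Fin d)) : PsiS hmn (PhiS hmn K) = K := by
  ext k
  simp only [PsiS, PhiS, Finset.mem_filter, Finset.mem_univ, true_and]
  split
  · next h =>
    have : e1 hmn ⟨k.1, h⟩ = k := Fin.ext rfl
    rw [this]
  · next h =>
    have : e2 hmn ⟨k.1 - m, by omega⟩ = k := Fin.ext (by simp [e2]; omega)
    rw [this]

lemma PhiS_PsiS (hmn : m + n = d) (P : Finset (Fin m) × Finset (Fin n)) :
    PhiS hmn (PsiS hmn P) = P := by
  have h1 : (PhiS hmn (PsiS hmn P)).1 = P.1 := by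
    ext i
    simp only [PhiS, PsiS, Finset.mem_filter, Finset.mem_univ, true_and]
    have hlt : ((e1 hmn i : Fin d) : ℕ) < m := i.2
    rw [dif_pos hlt]
    have : (⟨(e1 hmn i).1, hlt⟩ : Fin m) = i := Fin.ext rfl
    rw [this]
  have h2 : (PhiS hmn (PsiS hmn P)).2 = P.2 := by
    ext j
    simp only [PhiS, PsiS, Finset.mem_filter, Finset.mem_univ, true_and]
    have hnlt : ¬ ((e2 hmn j : Fin d) : ℕ) < m := by simp [e2]
    rw [dif_neg hnlt]
    have : (⟨(e2 hmn j).1 - m, by omega⟩ : Fin n) = j := Fin.ext (by simp [e2])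
    rw [this]
  exact Prod.ext h1 h2

lemma PhiS_bijective (hmn : m + n = d) : Function.Bijective (PhiS hmn) :=
  ⟨Function.LeftInverse.injective (PsiS_PhiS hmn),
   Function.RightInverse.surjective (fun P => PhiS_PsiS hmn P)⟩

lemma PhiS_card (hmn : m + n = d) (K : Finset (Fin d)) :
    (PhiS hmn K).1.card + (PhiS hmn K).2.card = K.card := by
  have hA : (PhiS hmn K).1.card = (K.filter (fun k : Fin d => k.1 < m)).card := by
    refine Finset.card_nbij (fun i => e1 hmn i) ?_ ?_ ?_
    · intro i hi
      simp only [Finset.mem_coe, PhiS, Finset.mem_filter, Finset.mem_univ, true_and] at hi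
      exact Finset.mem_filter.mpr ⟨hi, i.2⟩
    · intro i _ i' _ h
      have h' : (e1 hmn i).1 = (e1 hmn i').1 := congrArg Fin.val h
      exact Fin.ext h'
    · intro k hk
      simp only [Finset.coe_filter, Set.mem_setOf_eq] at hk
      refine ⟨⟨k.1, hk.2⟩, ?_, Fin.ext rfl⟩
      simp only [PhiS, Finset.coe_filter, Set.mem_setOf_eq, Finset.mem_univ, true_and]
      have : e1 hmn ⟨k.1, hk.2⟩ = k := Fin.ext rfl
      rw [this]; exact hk.1
  have hB : (PhiS hmn K).2.card = (K.filter (fun k : Fin d => ¬ k.1 < m)).card := by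
    refine Finset.card_nbij (fun j => e2 hmn j) ?_ ?_ ?_
    · intro j hj
      simp only [Finset.mem_coe, PhiS, Finset.mem_filter, Finset.mem_univ, true_and] at hj
      refine Finset.mem_filter.mpr ⟨hj, by simp [e2]⟩
    · intro j _ j' _ h
      have h' : (e2 hmn j).1 = (e2 hmn j').1 := congrArg Fin.val h
      simp only [e2] at h'
      exact Fin.ext (by omega)
    · intro k hk
      simp only [Finset.coe_filter, Set.mem_setOf_eq] at hk
      have hkd : (k : ℕ) < m + n := by omega
      refine ⟨⟨k.1 - m, by omega⟩, ?_, Fin.ext (by simp [e2]; omega)⟩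
      simp only [PhiS, Finset.coe_filter, Set.mem_setOf_eq, Finset.mem_univ, true_and]
      have : e2 hmn ⟨k.1 - m, by omega⟩ = k := Fin.ext (by simp [e2]; omega)
      rw [this]; exact hk.1
  rw [hA, hB, Finset.card_filter_add_card_filter_not]

lemma etaK_e1 (hmn : m + n = d) (K : Finset (Fin d)) (u v : Cube d) :
    (fun i => etaK K u v (e1 hmn i))
      = etaK (PhiS hmn K).1 (fun i => u (e1 hmn i)) (fun i => v (e1 hmn i)) := by
  funext i
  simp only [etaK, PhiS, Finset.mem_filter, Finset.mem_univ, true_and]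

lemma etaK_e2 (hmn : m + n = d) (K : Finset (Fin d)) (u v : Cube d) :
    (fun j => etaK K u v (e2 hmn j))
      = etaK (PhiS hmn K).2 (fun j => u (e2 hmn j)) (fun j => v (e2 hmn j)) := by
  funext j
  simp only [etaK, PhiS, Finset.mem_filter, Finset.mem_univ, true_and]

lemma boxSum_split (hmn : m + n = d) (F : Cube m → ℝ) (G : Cube n → ℝ) (H : Cube d → ℝ)
    (hH : ∀ w : Cube d, H w = F (fun i => w (e1 hmn i)) * G (fun j => w (e2 hmn j)))
    (u v : Cube d) :
    boxSum H u v
      = boxSum F (fun i => u (e1 hmn i)) (fun i => v (e1 hmn i)) *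
        boxSum G (fun j => u (e2 hmn j)) (fun j => v (e2 hmn j)) := by
  unfold boxSum
  calc ∑ K : Finset (Fin d), (-1 : ℝ) ^ (d - K.card) * H (etaK K u v)
      = ∑ P : Finset (Fin m) × Finset (Fin n),
          ((-1 : ℝ) ^ (m - P.1.card) *
            F (etaK P.1 (fun i => u (e1 hmn i)) (fun i => v (e1 hmn i)))) *
          ((-1 : ℝ) ^ (n - P.2.card) *
            G (etaK P.2 (fun j => u (e2 hmn j)) (fun j => v (e2 hmn j)))) := ?_
    _ = ∑ K₁ : Finset (Fin m), ∑ K₂ : Finset (Fin n),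
          ((-1 : ℝ) ^ (m - K₁.card) *
            F (etaK K₁ (fun i => u (e1 hmn i)) (fun i => v (e1 hmn i)))) *
          ((-1 : ℝ) ^ (n - K₂.card) *
            G (etaK K₂ (fun j => u (e2 hmn j)) (fun j => v (e2 hmn j)))) :=
        Fintype.sum_prod_type _
    _ = _ := (Fintype.sum_mul_sum _ _).symm
  refine Fintype.sum_bijective (PhiS hmn) (PhiS_bijective hmn) _ _ ?_
  intro K
  have ha : (PhiS hmn K).1.card ≤ m := by
    simpa [PhiS] using Finset.card_filter_le Finset.univ (fun i => e1 hmn i ∈ K)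
  have hb : (PhiS hmn K).2.card ≤ n := by
    simpa [PhiS] using Finset.card_filter_le Finset.univ (fun j => e2 hmn j ∈ K)
  have hsign : ((-1 : ℝ)) ^ (d - K.card)
      = (-1 : ℝ) ^ (m - (PhiS hmn K).1.card) * (-1 : ℝ) ^ (n - (PhiS hmn K).2.card) := by
    rw [← pow_add]
    congr 1
    have := PhiS_card hmn K
    omega
  rw [hH, hsign, etaK_e1, etaK_e2]
  ring

end Split
noncomputable def chi (c : ℝ) (t : ℝ) : ℝ := if t ≤ c then 1 else 0

lemma chi_eq_indicator (c : ℝ) :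
    chi c = (Set.Iic c).indicator (fun _ => (1 : ℝ)) := by
  funext t
  simp [chi, Set.indicator, Set.mem_Iic]

lemma integrable_chi (c : ℝ) : Integrable (chi c) (volume.restrict (Set.Ioc (0:ℝ) 1)) := by
  rw [chi_eq_indicator]
  exact (integrable_const (1:ℝ)).indicator measurableSet_Iic

lemma integral_chi {c : ℝ} (hc0 : 0 ≤ c) (hc1 : c ≤ 1) :
    ∫ t in Set.Ioc (0:ℝ) 1, chi c t = c := by
  rw [chi_eq_indicator]
  rw [MeasureTheory.integral_indicator_const (1:ℝ) measurableSet_Iic]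
  rw [measureReal_def, Measure.restrict_apply measurableSet_Iic]
  have : Set.Iic c ∩ Set.Ioc (0:ℝ) 1 = Set.Ioc 0 c := by
    ext t
    simp only [Set.mem_inter_iff, Set.mem_Iic, Set.mem_Ioc]
    constructor
    · rintro ⟨h1, h2, _⟩; exact ⟨h2, h1⟩
    · rintro ⟨h1, h2⟩; exact ⟨h2, h1, h2.trans hc1⟩
  rw [this, Real.volume_Ioc, sub_zero, ENNReal.toReal_ofReal hc0, smul_eq_mul, mul_one]

lemma chi_mono {c c' t : ℝ} (h : c ≤ c') : chi c t ≤ chi c' t := by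
  unfold chi
  split
  · next h1 => rw [if_pos (h1.trans h)]
  · next _ => split <;> norm_num

lemma chi_Mn {n : ℕ} [NeZero n] (w : Cube n) (t : ℝ) :
    chi (Mn w) t = ∏ j, chi ((w j : ℝ)) t := by
  unfold chi
  rw [Finset.prod_boole]
  by_cases h : t ≤ Mn w
  · rw [if_pos h, if_pos (fun j _ => h.trans (Mn_le w j))]
  · rw [if_neg h, if_neg (fun hall => h (le_Mn w (fun j => hall j (Finset.mem_univ j))))]

lemma boxSum_Mn_eq_integral {n : ℕ} [NeZero n] (x y : Cube n) :
    boxSum Mn x y = ∫ t in Set.Ioc (0:ℝ) 1, ∏ j, (chi ((y j : ℝ)) t - chi ((x j : ℝ)) t) := by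
  unfold boxSum
  have hterm : ∀ K : Finset (Fin n), (-1 : ℝ) ^ (n - K.card) * Mn (etaK K x y)
      = ∫ t in Set.Ioc (0:ℝ) 1,
          (-1 : ℝ) ^ (n - K.card) * chi (Mn (etaK K x y)) t := by
    intro K
    rw [MeasureTheory.integral_const_mul,
      integral_chi (Mn_nonneg _) (Mn_le_one _)]
  rw [Finset.sum_congr rfl fun K _ => hterm K]
  rw [← MeasureTheory.integral_finset_sum]
  · refine MeasureTheory.integral_congr_ae (Filter.Eventually.of_forall fun t => ?_)
    have h1 : ∀ K : Finset (Fin n), chi (Mn (etaK K x y)) t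
        = ∏ j, (if j ∈ K then chi ((y j : ℝ)) t else chi ((x j : ℝ)) t) := by
      intro K
      rw [chi_Mn]
      refine Finset.prod_congr rfl fun j _ => ?_
      simp only [etaK]
      split <;> rfl
    simp only [h1]
    exact signed_prod (fun j => chi ((x j : ℝ)) t) (fun j => chi ((y j : ℝ)) t)
  · intro K _
    exact (integrable_chi _).const_mul _
lemma boxSum_Mn_nonneg {n : ℕ} [NeZero n] {x y : Cube n} (hxy : x ≤ y) :
    0 ≤ boxSum Mn x y := by
  rw [boxSum_Mn_eq_integral]
  refine MeasureTheory.integral_nonneg fun t => ?_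
  refine Finset.prod_nonneg fun j _ => ?_
  have := chi_mono (t := t) (Subtype.coe_le_coe.mpr (hxy j))
  linarith

lemma boxSum_Mn_survival {n : ℕ} [NeZero n] (w : Cube n) :
    boxSum Mn (fun j => unitInterval.symm (w j)) 1 = Mn w := by
  rw [boxSum_Mn_eq_integral]
  have hcong : Set.EqOn
      (fun t => ∏ j, (chi (((1 : Cube n) j : ℝ)) t - chi ((unitInterval.symm (w j) : ℝ)) t))
      ((Set.Ioi (1 - Mn w)).indicator (fun _ => (1:ℝ)))
      (Set.Ioc (0:ℝ) 1) := by
    intro t ht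
    obtain ⟨ht0, ht1⟩ := ht
    have h1 : ∀ j : Fin n, (((1 : Cube n) j : ℝ)) = (1 : ℝ) := fun j => rfl
    have hfac : ∀ j : Fin n, chi (((1 : Cube n) j : ℝ)) t - chi ((unitInterval.symm (w j) : ℝ)) t
        = if 1 - (w j : ℝ) < t then 1 else 0 := by
      intro j
      rw [h1]
      simp only [chi, if_pos ht1, unitInterval.coe_symm_eq]
      by_cases h : t ≤ 1 - (w j : ℝ)
      · simp [h, not_lt.mpr h]
      · simp [h, not_le.mp h]
    simp only [hfac]
    rw [Finset.prod_boole]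
    simp only [Set.indicator, Set.mem_Ioi]
    by_cases h : 1 - Mn w < t
    · rw [if_pos h, if_pos (fun j _ => by have := Mn_le w j; linarith)]
    · rw [if_neg h, if_neg (fun hall => by
        obtain ⟨j0, hj0⟩ := Mn_mem w
        have := hall j0 (Finset.mem_univ j0)
        rw [hj0] at h
        exact h (by linarith))]
  rw [MeasureTheory.setIntegral_congr_fun measurableSet_Ioc hcong]
  rw [MeasureTheory.integral_indicator_const (1:ℝ) measurableSet_Ioi]
  rw [measureReal_def, Measure.restrict_apply measurableSet_Ioi]
  have hm0 := Mn_nonneg w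
  have hm1 := Mn_le_one w
  have : Set.Ioi (1 - Mn w) ∩ Set.Ioc (0:ℝ) 1 = Set.Ioc (1 - Mn w) 1 := by
    ext t
    simp only [Set.mem_inter_iff, Set.mem_Ioi, Set.mem_Ioc]
    constructor
    · rintro ⟨h1, _, h3⟩; exact ⟨h1, h3⟩
    · rintro ⟨h1, h2⟩; exact ⟨h1, by linarith, h2⟩
  rw [this, Real.volume_Ioc]
  have : (1:ℝ) - (1 - Mn w) = Mn w := by ring
  rw [this, ENNReal.toReal_ofReal hm0]
  simp
noncomputable def lamI : Measure unitInterval :=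
  Measure.map (Set.projIcc (0:ℝ) 1 zero_le_one) (volume.restrict (Set.Icc (0:ℝ) 1))

lemma measurable_projIcc01 : Measurable (Set.projIcc (0:ℝ) 1 zero_le_one) :=
  continuous_projIcc.measurable

instance : IsProbabilityMeasure (volume.restrict (Set.Icc (0:ℝ) 1)) :=
  ⟨by rw [Measure.restrict_apply_univ]; simp [Real.volume_Icc]⟩

instance : IsProbabilityMeasure lamI :=
  Measure.isProbabilityMeasure_map measurable_projIcc01.aemeasurable

lemma measurableSet_le_const (a : unitInterval) :
    MeasurableSet {x : unitInterval | x ≤ a} := by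
  have : {x : unitInterval | x ≤ a} = Subtype.val ⁻¹' (Set.Iic (a : ℝ)) := by
    ext x; simp [Set.mem_Iic]
  rw [this]
  exact measurable_subtype_coe measurableSet_Iic

lemma lamI_le (a : unitInterval) :
    lamI {x : unitInterval | x ≤ a} = ENNReal.ofReal (a : ℝ) := by
  rw [lamI, Measure.map_apply measurable_projIcc01 (measurableSet_le_const a)]
  rw [Measure.restrict_apply (measurable_projIcc01 (measurableSet_le_const a))]
  have hset : (Set.projIcc (0:ℝ) 1 zero_le_one) ⁻¹' {x : unitInterval | x ≤ a}
      ∩ Set.Icc (0:ℝ) 1 = Set.Icc 0 (a : ℝ) := by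
    ext t
    simp only [Set.mem_inter_iff, Set.mem_preimage, Set.mem_setOf_eq, Set.mem_Icc]
    constructor
    · rintro ⟨h1, h2, h3⟩
      rw [Set.projIcc_of_mem zero_le_one ⟨h2, h3⟩] at h1
      exact ⟨h2, Subtype.coe_le_coe.mpr h1⟩
    · rintro ⟨h1, h2⟩
      have h3 : t ≤ 1 := h2.trans a.2.2
      refine ⟨?_, h1, h3⟩
      rw [Set.projIcc_of_mem zero_le_one ⟨h1, h3⟩]
      exact Subtype.coe_le_coe.mp (by simpa using h2)
  rw [hset, Real.volume_Icc, sub_zero]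

lemma Icc_zero_eq_le {a : unitInterval} : Set.Icc 0 a = {x : unitInterval | x ≤ a} := by
  ext x
  simp only [Set.mem_Icc, Set.mem_setOf_eq]
  exact ⟨fun h => h.2, fun h => ⟨unitInterval.nonneg', h⟩⟩

noncomputable def nuProd (n : ℕ) : Measure (Cube n) := Measure.pi (fun _ => lamI)

noncomputable def nuDiag (n : ℕ) : Measure (Cube n) :=
  Measure.map (fun x : unitInterval => fun _ : Fin n => x) lamI

instance (n : ℕ) : IsProbabilityMeasure (nuProd n) := by
  unfold nuProd; infer_instance

lemma measurable_diagCube (n : ℕ) :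
    Measurable (fun x : unitInterval => fun _ : Fin n => x) :=
  measurable_pi_lambda _ fun _ => measurable_id

instance (n : ℕ) : IsProbabilityMeasure (nuDiag n) :=
  Measure.isProbabilityMeasure_map (measurable_diagCube n).aemeasurable

lemma cube_Icc_eq_pi {n : ℕ} (v : Cube n) :
    Set.Icc (0 : Cube n) v = Set.univ.pi (fun j => {x : unitInterval | x ≤ v j}) := by
  rw [← Set.pi_univ_Icc]
  refine Set.pi_congr rfl fun j _ => ?_
  exact Icc_zero_eq_le

lemma measurableSet_cube_Icc {n : ℕ} (v : Cube n) :
    MeasurableSet (Set.Icc (0 : Cube n) v) := by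
  rw [cube_Icc_eq_pi]
  exact MeasurableSet.pi Set.countable_univ fun j _ => measurableSet_le_const (v j)

lemma nuProd_Icc {n : ℕ} (v : Cube n) :
    nuProd n (Set.Icc 0 v) = ∏ j, ENNReal.ofReal ((v j : ℝ)) := by
  rw [cube_Icc_eq_pi, nuProd, Measure.pi_pi]
  exact Finset.prod_congr rfl fun j _ => lamI_le (v j)

lemma nuDiag_Icc {n : ℕ} [NeZero n] (v : Cube n) :
    nuDiag n (Set.Icc 0 v) = ENNReal.ofReal (Mn v) := by
  rw [nuDiag, Measure.map_apply (measurable_diagCube n) (measurableSet_cube_Icc v)]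
  obtain ⟨j0, hj0⟩ := Mn_mem v
  have hset : (fun x : unitInterval => fun _ : Fin n => x) ⁻¹' (Set.Icc 0 v)
      = {x : unitInterval | x ≤ v j0} := by
    ext x
    simp only [Set.mem_preimage, Set.mem_Icc, Set.mem_setOf_eq]
    constructor
    · intro h
      exact h.2 j0
    · intro h
      refine ⟨fun j => unitInterval.nonneg', fun j => ?_⟩
      have h1 : (x : ℝ) ≤ Mn v := by rw [hj0]; exact Subtype.coe_le_coe.mpr h
      exact Subtype.coe_le_coe.mp (h1.trans (Mn_le v j))
  rw [hset, lamI_le, hj0]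

section Phi
variable {d m n : ℕ}

noncomputable def phiS (hmn : m + n = d) (p : Cube m × Cube n) : Cube d :=
  fun k => if h : k.1 < m then p.1 ⟨k.1, h⟩ else p.2 ⟨k.1 - m, by omega⟩

lemma phiS_e1 (hmn : m + n = d) (p : Cube m × Cube n) (i : Fin m) :
    phiS hmn p (e1 hmn i) = p.1 i := by
  have h : (e1 hmn i).1 < m := i.2
  simp only [phiS, dif_pos h]
  exact congrArg p.1 (Fin.ext rfl)

lemma phiS_e2 (hmn : m + n = d) (p : Cube m × Cube n) (j : Fin n) :
    phiS hmn p (e2 hmn j) = p.2 j := by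
  have h : ¬ (e2 hmn j).1 < m := by simp [e2]
  simp only [phiS, dif_neg h]
  exact congrArg p.2 (Fin.ext (by show m + j.1 - m = j.1; omega))

lemma measurable_phiS (hmn : m + n = d) : Measurable (phiS hmn) := by
  refine measurable_pi_lambda _ fun k => ?_
  by_cases h : k.1 < m
  · simp only [phiS, dif_pos h]
    exact (measurable_pi_apply _).comp measurable_fst
  · simp only [phiS, dif_neg h]
    exact (measurable_pi_apply _).comp measurable_snd

lemma phiS_preimage_Icc (hmn : m + n = d) (u : Cube d) :
    phiS hmn ⁻¹' (Set.Icc 0 u)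
      = Set.Icc 0 (fun i => u (e1 hmn i)) ×ˢ Set.Icc 0 (fun j => u (e2 hmn j)) := by
  ext p
  simp only [Set.mem_preimage, Set.mem_Icc, Set.mem_prod]
  constructor
  · rintro ⟨-, h⟩
    refine ⟨⟨fun i => unitInterval.nonneg', fun i => ?_⟩,
            ⟨fun j => unitInterval.nonneg', fun j => ?_⟩⟩
    · have := h (e1 hmn i); rwa [phiS_e1] at this
    · have := h (e2 hmn j); rwa [phiS_e2] at this
  · rintro ⟨⟨-, h1⟩, ⟨-, h2⟩⟩
    refine ⟨fun k => unitInterval.nonneg', fun k => ?_⟩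
    by_cases h : k.1 < m
    · have hk : e1 hmn ⟨k.1, h⟩ = k := Fin.ext rfl
      have h3 := h1 ⟨k.1, h⟩
      have h4 : phiS hmn p k = p.1 ⟨k.1, h⟩ := dif_pos h
      rw [h4]
      exact le_of_le_of_eq h3 (congrArg u hk)
    · have hk : e2 hmn ⟨k.1 - m, by omega⟩ = k := Fin.ext (by show m + (k.1 - m) = k.1; omega)
      have h3 := h2 ⟨k.1 - m, by omega⟩
      have h4 : phiS hmn p k = p.2 ⟨k.1 - m, by omega⟩ := dif_neg h
      rw [h4]
      exact le_of_le_of_eq h3 (congrArg u hk)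

end Phi
lemma boxSum_prodBlock {n : ℕ} (x y : Cube n) :
    boxSum (fun w : Cube n => ∏ j, ((w j : ℝ))) x y = ∏ j, ((y j : ℝ) - (x j : ℝ)) := by
  unfold boxSum
  rw [← signed_prod (fun j => ((x j : ℝ))) (fun j => ((y j : ℝ)))]
  refine Finset.sum_congr rfl fun K _ => ?_
  congr 1
  refine Finset.prod_congr rfl fun j _ => ?_
  simp only [etaK]
  split <;> rfl

lemma Mn_of_coord_zero {n : ℕ} [NeZero n] {w : Cube n} {j0 : Fin n} (h : w j0 = 0) :
    Mn w = 0 := by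
  refine le_antisymm ?_ (Mn_nonneg w)
  have := Mn_le w j0
  rw [h] at this
  simpa using this

lemma Mn_of_single {n : ℕ} [NeZero n] {w : Cube n} {j0 : Fin n} {a : unitInterval}
    (h0 : w j0 = a) (h1 : ∀ j, j ≠ j0 → w j = 1) : Mn w = (a : ℝ) := by
  refine le_antisymm (by rw [← h0]; exact Mn_le w j0) (le_Mn w fun j => ?_)
  by_cases hj : j = j0
  · rw [hj, h0]
  · rw [h1 j hj]; exact a.2.2

/-- For `d ≥ 4`, `2 ≤ m ≤ d-2` and an `m`-dimensional `m`-CM copula `C`, the copulas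
`D(u,v) = C(u)·∏ vᵢ` and `E(u,v) = C(u)·min vᵢ` are `{1,...,m}`-countermonotonic
`d`-dimensional copulas with `D ⪯ E` and `D ≠ E`; in particular `E` is a
`{1,...,m}`-CM copula which is not minimal. -/
theorem stmt6 (d m : ℕ) (hd : 4 ≤ d) (hm2 : 2 ≤ m) (hmd : m ≤ d - 2)
    (C : Cube m → ℝ) (hC : IsCopula C) (hCcm : IsKCM Finset.univ C)
    (D E : Cube d → ℝ)
    (hD : ∀ u : Cube d, D u =
      C (fun i => u (Fin.castLE (by omega) i)) *
      ∏ j : Fin (d - m), (u (Fin.cast (by omega) (Fin.natAdd m j)) : ℝ))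
    (hE : ∀ u : Cube d, E u =
      C (fun i => u (Fin.castLE (by omega) i)) *
      sInf (Set.range fun j : Fin (d - m) => (u (Fin.cast (by omega) (Fin.natAdd m j)) : ℝ))) :
    IsCopula D ∧ IsCopula E ∧
    IsKCM ({k : Fin d | (k : ℕ) < m} : Finset (Fin d)) D ∧
    IsKCM ({k : Fin d | (k : ℕ) < m} : Finset (Fin d)) E ∧
    ConcLE D E ∧ D ≠ E ∧ ¬ IsMinimalCopula E := by
  have hmn : m + (d - m) = d := by omega
  haveI : NeZero m := ⟨by omega⟩
  haveI : NeZero (d - m) := ⟨by omega⟩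
  have hCpos : ∀ u, 0 ≤ C u := copula_nonneg hC
  have hDfac : ∀ w : Cube d,
      D w = C (fun i => w (e1 hmn i)) * ∏ j, ((w (e2 hmn j) : ℝ)) := fun w => hD w
  have hEfac : ∀ w : Cube d,
      E w = C (fun i => w (e1 hmn i)) * Mn (fun j => w (e2 hmn j)) := fun w => hE w
  -- membership in the index set
  have hKd : ∀ k : Fin d, k ∈ ({k : Fin d | (k : ℕ) < m} : Finset (Fin d)) ↔ (k : ℕ) < m := by
    intro k
    simp [Finset.mem_filter]
  -- some coordinate helpers
  have he1k : ∀ (k : Fin d) (h : k.1 < m), e1 hmn ⟨k.1, h⟩ = k := fun k h => Fin.ext rfl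
  have he2k : ∀ (k : Fin d) (h : ¬ k.1 < m), e2 hmn ⟨k.1 - m, by omega⟩ = k := by
    intro k h
    exact Fin.ext (by show m + (k.1 - m) = k.1; omega)
  have he2ne : ∀ (k : Fin d), k.1 < m → ∀ j : Fin (d - m), e2 hmn j ≠ k := by
    intro k hk j hj
    have : (e2 hmn j).1 = k.1 := congrArg Fin.val hj
    simp only [e2] at this
    omega
  have he1ne : ∀ (k : Fin d), ¬ k.1 < m → ∀ i : Fin m, e1 hmn i ≠ k := by
    intro k hk i hi
    have : (e1 hmn i).1 = k.1 := congrArg Fin.val hi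
    simp only [e1] at this
    have := i.2
    omega
  ------------------------------------------------------------------
  -- IsCopula D
  ------------------------------------------------------------------
  have hDcop : IsCopula D := by
    refine ⟨?_, ?_, ?_⟩
    · intro u v huv
      show 0 ≤ boxSum D u v
      rw [boxSum_split hmn C (fun w : Cube (d - m) => ∏ j, ((w j : ℝ))) D hDfac u v]
      refine mul_nonneg (hC.1 _ _ (fun i => huv (e1 hmn i))) ?_
      rw [boxSum_prodBlock]
      exact Finset.prod_nonneg fun j _ =>
        sub_nonneg.mpr (Subtype.coe_le_coe.mpr (huv (e2 hmn j)))
    · intro k u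
      rw [hDfac]
      by_cases h : k.1 < m
      · have hz : (fun i => etaK {k} u 0 (e1 hmn i)) ⟨k.1, h⟩ = 0 := by
          simp only [etaK, Finset.mem_singleton, he1k k h, if_pos rfl]
          rfl
        rw [copula_zero hC hz, zero_mul]
      · have hz : etaK {k} u 0 (e2 hmn ⟨k.1 - m, by omega⟩) = 0 := by
          simp only [etaK, Finset.mem_singleton, he2k k h, if_pos rfl]
          rfl
        rw [Finset.prod_eq_zero (Finset.mem_univ (⟨k.1 - m, by omega⟩ : Fin (d - m)))
          (by rw [hz]; rfl), mul_zero]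
    · intro k u
      rw [hDfac]
      by_cases h : k.1 < m
      · have hCarg : (fun i => etaK {k} 1 u (e1 hmn i))
            = etaK {(⟨k.1, h⟩ : Fin m)} 1 (fun i => u (e1 hmn i)) := by
          funext i
          simp only [etaK, Finset.mem_singleton]
          by_cases hi : i = ⟨k.1, h⟩
          · rw [if_pos hi, if_pos (by rw [hi]; exact he1k k h)]
          · rw [if_neg hi, if_neg (fun hc : e1 hmn i = k => hi (by
              have h' : (e1 hmn i).1 = k.1 := congrArg Fin.val hc
              exact Fin.ext h'))]
            rfl
        have hprod : ∀ j : Fin (d - m), (etaK {k} 1 u (e2 hmn j) : ℝ) = 1 := by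
          intro j
          simp only [etaK, Finset.mem_singleton, if_neg (he2ne k h j)]
          rfl
        rw [hCarg, hC.2.2 ⟨k.1, h⟩, Finset.prod_congr rfl (fun j _ => hprod j),
          Finset.prod_const_one, mul_one]
        exact congrArg _ (congrArg u (he1k k h))
      · have hCarg : (fun i => etaK {k} 1 u (e1 hmn i)) = (1 : Cube m) := by
          funext i
          simp only [etaK, Finset.mem_singleton, if_neg (he1ne k h i)]
          rfl
        have hprod : ∏ j, ((etaK {k} 1 u (e2 hmn j) : ℝ)) = (u k : ℝ) := by
          rw [Finset.prod_eq_single (⟨k.1 - m, by omega⟩ : Fin (d - m))]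
          · simp [etaK, Finset.mem_singleton, he2k k h]
          · intro j _ hj
            have : e2 hmn j ≠ k := by
              intro hc
              exact hj (Fin.ext (by
                have : (e2 hmn j).1 = k.1 := congrArg Fin.val hc
                simp only [e2] at this ⊢
                omega))
            simp only [etaK, Finset.mem_singleton, if_neg this]
            rfl
          · intro hc
            exact absurd (Finset.mem_univ _) hc
        rw [hCarg, copula_one hC, hprod, one_mul]
  ------------------------------------------------------------------
  -- IsCopula E
  ------------------------------------------------------------------
  have hEcop : IsCopula E := by
    refine ⟨?_, ?_, ?_⟩
    · intro u v huv
      show 0 ≤ boxSum E u v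
      rw [boxSum_split hmn C Mn E hEfac u v]
      exact mul_nonneg (hC.1 _ _ (fun i => huv (e1 hmn i)))
        (boxSum_Mn_nonneg (fun j => huv (e2 hmn j)))
    · intro k u
      rw [hEfac]
      by_cases h : k.1 < m
      · have hz : (fun i => etaK {k} u 0 (e1 hmn i)) ⟨k.1, h⟩ = 0 := by
          simp only [etaK, Finset.mem_singleton, he1k k h, if_pos rfl]
          rfl
        rw [copula_zero hC hz, zero_mul]
      · have hz : etaK {k} u 0 (e2 hmn ⟨k.1 - m, by omega⟩) = 0 := by
          simp only [etaK, Finset.mem_singleton, he2k k h, if_pos rfl]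
          rfl
        rw [Mn_of_coord_zero (j0 := ⟨k.1 - m, by omega⟩) hz, mul_zero]
    · intro k u
      rw [hEfac]
      by_cases h : k.1 < m
      · have hCarg : (fun i => etaK {k} 1 u (e1 hmn i))
            = etaK {(⟨k.1, h⟩ : Fin m)} 1 (fun i => u (e1 hmn i)) := by
          funext i
          simp only [etaK, Finset.mem_singleton]
          by_cases hi : i = ⟨k.1, h⟩
          · rw [if_pos hi, if_pos (by rw [hi]; exact he1k k h)]
          · rw [if_neg hi, if_neg (fun hc : e1 hmn i = k => hi (by
              have h' : (e1 hmn i).1 = k.1 := congrArg Fin.val hc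
              exact Fin.ext h'))]
            rfl
        have hMn : Mn (fun j => etaK {k} 1 u (e2 hmn j)) = 1 := by
          have h1 : ∀ j : Fin (d - m), ((etaK {k} 1 u (e2 hmn j) : ℝ)) = 1 := by
            intro j
            simp only [etaK, Finset.mem_singleton, if_neg (he2ne k h j)]
            rfl
          refine le_antisymm (Mn_le_one _) (le_Mn _ fun j => ?_)
          rw [h1 j]
        rw [hCarg, hC.2.2 ⟨k.1, h⟩, hMn, mul_one]
        exact congrArg _ (congrArg u (he1k k h))
      · have hCarg : (fun i => etaK {k} 1 u (e1 hmn i)) = (1 : Cube m) := by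
          funext i
          simp only [etaK, Finset.mem_singleton, if_neg (he1ne k h i)]
          rfl
        have hMn : Mn (fun j => etaK {k} 1 u (e2 hmn j)) = (u k : ℝ) := by
          refine Mn_of_single (j0 := (⟨k.1 - m, by omega⟩ : Fin (d - m))) ?_ ?_
          · simp [etaK, Finset.mem_singleton, he2k k h]
          · intro j hj
            have : e2 hmn j ≠ k := by
              intro hc
              exact hj (Fin.ext (by
                have : (e2 hmn j).1 = k.1 := congrArg Fin.val hc
                simp only [e2] at this ⊢
                omega))
            simp only [etaK, Finset.mem_singleton, if_neg this]
            rfl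
        rw [hCarg, copula_one hC, hMn, one_mul]
  ------------------------------------------------------------------
  -- survival factorizations
  ------------------------------------------------------------------
  have hsurvD : ∀ w : Cube d, survival D w
      = survival C (fun i => w (e1 hmn i)) * ∏ j, ((w (e2 hmn j) : ℝ)) := by
    intro w
    rw [survival_eq_boxSum D w,
      boxSum_split hmn C (fun w : Cube (d - m) => ∏ j, ((w j : ℝ))) D hDfac]
    congr 1
    · rw [survival_eq_boxSum C]
      rfl
    · rw [boxSum_prodBlock]
      refine Finset.prod_congr rfl fun j _ => ?_
      have h1 : (((1 : Cube d) (e2 hmn j) : ℝ)) = 1 := rfl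
      rw [h1, unitInterval.coe_symm_eq]
      ring
  have hsurvE : ∀ w : Cube d, survival E w
      = survival C (fun i => w (e1 hmn i)) * Mn (fun j => w (e2 hmn j)) := by
    intro w
    rw [survival_eq_boxSum E w, boxSum_split hmn C Mn E hEfac]
    congr 1
    · rw [survival_eq_boxSum C]
      rfl
    · exact boxSum_Mn_survival (fun j => w (e2 hmn j))
  ------------------------------------------------------------------
  -- ConcLE D E
  ------------------------------------------------------------------
  have hconc : ConcLE D E := by
    constructor
    · intro u
      rw [hDfac, hEfac]
      exact mul_le_mul_of_nonneg_left (prod_le_Mn _) (hCpos _)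
    · intro w
      rw [hsurvD, hsurvE]
      exact mul_le_mul_of_nonneg_left (prod_le_Mn _) (survival_nonneg hC _)
  ------------------------------------------------------------------
  -- D ≠ E
  ------------------------------------------------------------------
  have hne : D ≠ E := by
    intro hDE
    set u0 : Cube d := fun k => if k.1 < m then 1 else ⟨1/2, by norm_num⟩ with hu0
    have hA : (fun i => u0 (e1 hmn i)) = (1 : Cube m) := by
      funext i
      have hi : (e1 hmn i).1 < m := i.2
      simp only [hu0]
      rw [if_pos hi]
      rfl
    have hB : ∀ j : Fin (d - m), u0 (e2 hmn j) = ⟨1/2, by norm_num⟩ := by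
      intro j
      simp only [hu0]
      rw [if_neg (by simp [e2])]
    have hDu : D u0 = (1/2 : ℝ) ^ (d - m) := by
      rw [hDfac, hA, copula_one hC, one_mul]
      rw [Finset.prod_congr rfl (fun j _ => by rw [hB j])]
      simp [Finset.prod_const]
    have hEu : E u0 = 1/2 := by
      rw [hEfac, hA, copula_one hC, one_mul]
      have : Mn (fun j => u0 (e2 hmn j)) = ((⟨1/2, by norm_num⟩ : unitInterval) : ℝ) := by
        refine le_antisymm ?_ (le_Mn _ fun j => by rw [hB j])
        have := Mn_le (fun j => u0 (e2 hmn j)) ⟨0, by omega⟩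
        rwa [hB] at this
      rw [this]
    have hlt : (1/2 : ℝ) ^ (d - m) < 1/2 := by
      have h2 : (1:ℕ) < d - m := by omega
      have := pow_lt_pow_right_of_lt_one₀ (by norm_num : (0:ℝ) < 1/2) (by norm_num) h2
      simpa using this
    rw [hDE] at hDu
    rw [hEu] at hDu
    linarith
  ------------------------------------------------------------------
  -- IsKCM for D and E
  ------------------------------------------------------------------
  obtain ⟨g0, c, hg0, μC, ⟨hμCprob, hμCIcc⟩, hμCset⟩ := hCcm
  haveI := hμCprob
  set Kd : Finset (Fin d) := ({k : Fin d | (k : ℕ) < m} : Finset (Fin d)) with hKdDef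
  set g : Fin d → unitInterval → ℝ :=
    fun k => if h : k.1 < m then g0 ⟨k.1, h⟩ else fun x => (x : ℝ) with hgDef
  have hgprops : ∀ k ∈ Kd, StrictMono (g k) ∧ Continuous (g k) := by
    intro k hk
    have h : k.1 < m := (hKd k).mp hk
    simp only [hgDef, dif_pos h]
    exact hg0 ⟨k.1, h⟩ (Finset.mem_univ _)
  have hsum : ∀ w : Cube d, ∑ k ∈ Kd, g k (w k) = ∑ i : Fin m, g0 i (w (e1 hmn i)) := by
    intro w
    symm
    refine Finset.sum_nbij' (fun i : Fin m => e1 hmn i)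
      (fun k : Fin d => (⟨k.1 % m, Nat.mod_lt _ (by omega)⟩ : Fin m)) ?_ ?_ ?_ ?_ ?_
    · intro i _
      exact (hKd _).mpr i.2
    · intro k _
      exact Finset.mem_univ _
    · intro i _
      exact Fin.ext (by simp [e1, Nat.mod_eq_of_lt i.2])
    · intro k hk
      have h : k.1 < m := (hKd k).mp hk
      exact Fin.ext (by simp [e1, Nat.mod_eq_of_lt h])
    · intro i _
      have h : (e1 hmn i).1 < m := i.2
      simp only [hgDef, dif_pos h]
      have : (⟨(e1 hmn i).1, h⟩ : Fin m) = i := Fin.ext rfl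
      rw [this]
  have hmeasS : MeasurableSet {w : Cube d | ∑ k ∈ Kd, g k (w k) = c} := by
    have hmeas : Measurable (fun w : Cube d => ∑ k ∈ Kd, g k (w k)) := by
      refine Finset.measurable_sum _ fun k hk => ?_
      exact ((hgprops k hk).2.measurable).comp (measurable_pi_apply k)
    exact hmeas (measurableSet_singleton c)
  have hSpre : phiS hmn ⁻¹' {w : Cube d | ∑ k ∈ Kd, g k (w k) = c}
      = {x : Cube m | ∑ i ∈ Finset.univ, g0 i (x i) = c} ×ˢ (Set.univ : Set (Cube (d - m))) := by
    ext p
    simp only [Set.mem_preimage, Set.mem_setOf_eq, Set.mem_prod, Set.mem_univ, and_true]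
    rw [hsum (phiS hmn p)]
    constructor
    · intro h
      rw [← h]
      exact Finset.sum_congr rfl fun i _ => by rw [phiS_e1]
    · intro h
      rw [← h]
      exact Finset.sum_congr rfl fun i _ => by rw [phiS_e1]
  -- copulameasure helper for D
  have hKCMD : IsKCM Kd D := by
    refine ⟨g, c, hgprops, Measure.map (phiS hmn) (μC.prod (nuProd (d - m))), ⟨?_, ?_⟩, ?_⟩
    · exact Measure.isProbabilityMeasure_map (measurable_phiS hmn).aemeasurable
    · intro u
      rw [Measure.map_apply (measurable_phiS hmn) (measurableSet_cube_Icc u),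
        phiS_preimage_Icc, Measure.prod_prod, hμCIcc, nuProd_Icc, hDfac,
        ENNReal.ofReal_mul (hCpos _),
        ENNReal.ofReal_prod_of_nonneg (fun j _ => (u (e2 hmn j)).2.1)]
    · rw [Measure.map_apply (measurable_phiS hmn) hmeasS, hSpre, Measure.prod_prod,
        hμCset, measure_univ, one_mul]
  have hKCME : IsKCM Kd E := by
    refine ⟨g, c, hgprops, Measure.map (phiS hmn) (μC.prod (nuDiag (d - m))), ⟨?_, ?_⟩, ?_⟩
    · exact Measure.isProbabilityMeasure_map (measurable_phiS hmn).aemeasurable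
    · intro u
      rw [Measure.map_apply (measurable_phiS hmn) (measurableSet_cube_Icc u),
        phiS_preimage_Icc, Measure.prod_prod, hμCIcc, nuDiag_Icc, hEfac,
        ENNReal.ofReal_mul (hCpos _)]
    · rw [Measure.map_apply (measurable_phiS hmn) hmeasS, hSpre, Measure.prod_prod,
        hμCset, measure_univ, one_mul]
  ------------------------------------------------------------------
  refine ⟨hDcop, hEcop, hKCMD, hKCME, hconc, hne, ?_⟩
  intro hmin
  exact hne (hmin.2 D hDcop hconc)
end

section
/- Every minimal copula is Kendall-countermonotonic: m(𝒞,⪯) ⊆ 𝒞_{τ-CM}. Moreover, for d = 2, a bivariate copula is minimal if and only if it is Kendall-countermonotonic. -/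
open MeasureTheory unitInterval

namespace Stmt8

open Finset

variable {d : ℕ}

/-- update -/
def upd (s : Cube d) (k : Fin d) (m : unitInterval) : Cube d :=
  fun j => if j = k then m else s j

@[simp] lemma upd_self (s : Cube d) (k m) : upd s k m k = m := by simp [upd]

@[simp] lemma upd_other (s : Cube d) (k m) {j} (h : j ≠ k) : upd s k m j = s j := by
  simp [upd, h]

lemma upd_idem (s : Cube d) (k m m') : upd (upd s k m) k m' = upd s k m' := by
  funext j; by_cases h : j = k <;> simp [upd, h]

lemma upd_eq_self (s : Cube d) (k) : upd s k (s k) = s := by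
  funext j; by_cases h : j = k <;> simp [upd, h]

@[simp] lemma etaK_mem (K : Finset (Fin d)) (u v : Cube d) {k} (h : k ∈ K) :
    etaK K u v k = v k := by simp [etaK, h]

@[simp] lemma etaK_not_mem (K : Finset (Fin d)) (u v : Cube d) {k} (h : k ∉ K) :
    etaK K u v k = u k := by simp [etaK, h]

@[simp] lemma etaK_empty (u v : Cube d) : etaK ∅ u v = u := by funext j; simp [etaK]

@[simp] lemma etaK_univ (u v : Cube d) : etaK univ u v = v := by funext j; simp [etaK]

lemma etaK_insert {K : Finset (Fin d)} {k} (u v : Cube d) :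
    etaK (insert k K) u v = upd (etaK K u v) k (v k) := by
  funext j
  by_cases h : j = k
  · subst h; simp [etaK]
  · by_cases hj : j ∈ K <;> simp [etaK, upd, h, hj]

/-- `V f s t`: the `d`-dimensional alternating sum ("box volume"). -/
def V (f : Cube d → ℝ) (s t : Cube d) : ℝ :=
  ∑ K : Finset (Fin d), (-1 : ℝ) ^ (d - K.card) * f (etaK K s t)

/-- alternating sum only over coordinates in `S`. -/
def VS (S : Finset (Fin d)) (f : Cube d → ℝ) (s t : Cube d) : ℝ :=
  ∑ K ∈ S.powerset, (-1 : ℝ) ^ (S.card - K.card) * f (etaK K s t)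

lemma V_eq_VS (f : Cube d → ℝ) (s t : Cube d) : V f s t = VS univ f s t := by
  rw [VS, Finset.powerset_univ, V]
  refine Finset.sum_congr rfl fun K _ => ?_
  rw [Finset.card_univ, Fintype.card_fin]

@[simp] lemma VS_empty (f : Cube d → ℝ) (s t : Cube d) : VS ∅ f s t = f s := by
  simp [VS]

lemma VS_insert {S : Finset (Fin d)} {k : Fin d} (hk : k ∉ S) (f : Cube d → ℝ)
    (s t : Cube d) :
    VS (insert k S) f s t = VS S f (upd s k (t k)) t - VS S f s t := by
  rw [VS, Finset.sum_powerset_insert hk]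
  have hcard : (insert k S).card = S.card + 1 := Finset.card_insert_of_notMem hk
  have h1 : ∑ K ∈ S.powerset, (-1 : ℝ) ^ ((insert k S).card - K.card) * f (etaK K s t)
      = -VS S f s t := by
    rw [VS, ← Finset.sum_neg_distrib]
    refine Finset.sum_congr rfl fun K hK => ?_
    have hle : K.card ≤ S.card := Finset.card_le_card (Finset.mem_powerset.mp hK)
    have : (insert k S).card - K.card = (S.card - K.card) + 1 := by omega
    rw [this, pow_succ]
    ring
  have h2 : ∑ K ∈ S.powerset, (-1 : ℝ) ^ ((insert k S).card - (insert k K).card)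
        * f (etaK (insert k K) s t)
      = VS S f (upd s k (t k)) t := by
    rw [VS]
    refine Finset.sum_congr rfl fun K hK => ?_
    have hK' := Finset.mem_powerset.mp hK
    have hkK : k ∉ K := fun h => hk (hK' h)
    have hle : K.card ≤ S.card := Finset.card_le_card hK'
    have hc : (insert k K).card = K.card + 1 := Finset.card_insert_of_notMem hkK
    have hsign : (insert k S).card - (insert k K).card = S.card - K.card := by
      rw [hcard, hc]; omega
    have harg : etaK (insert k K) s t = etaK K (upd s k (t k)) t := by
      funext j
      by_cases h : j = k
      · subst h; simp [etaK, hkK]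
      · by_cases hj : j ∈ K <;> simp [etaK, upd, h, hj]
    rw [hsign, harg]
  rw [h1, h2]; ring

/-- updating `t` at a coordinate outside `S` does not change `VS S`. -/
lemma VS_top_indep {S : Finset (Fin d)} {k : Fin d} (hk : k ∉ S) (f : Cube d → ℝ)
    (s t : Cube d) (m : unitInterval) :
    VS S f s (upd t k m) = VS S f s t := by
  rw [VS, VS]
  refine Finset.sum_congr rfl fun K hK => ?_
  have hkK : k ∉ K := fun h => hk (Finset.mem_powerset.mp hK h)
  congr 2
  funext j
  by_cases hj : j ∈ K
  · have : j ≠ k := fun h => hkK (h ▸ hj)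
    simp [etaK, hj, upd, this]
  · simp [etaK, hj]

lemma univ_eq_insert_erase (k : Fin d) :
    (univ : Finset (Fin d)) = insert k (univ.erase k) := by
  simp [Finset.insert_erase (Finset.mem_univ k)]

/-- the fundamental splitting identity. -/
lemma Vsplit (f : Cube d → ℝ) (s t : Cube d) (k : Fin d) (m : unitInterval) :
    V f s t = V f s (upd t k m) + V f (upd s k m) t := by
  have hk : k ∉ (univ : Finset (Fin d)).erase k := Finset.notMem_erase k _
  have e1 : V f s t = VS (univ.erase k) f (upd s k (t k)) t - VS (univ.erase k) f s t := by
    conv_lhs => rw [V_eq_VS, univ_eq_insert_erase k]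
    rw [VS_insert hk]
  have e2 : V f s (upd t k m)
      = VS (univ.erase k) f (upd s k m) t - VS (univ.erase k) f s t := by
    conv_lhs => rw [V_eq_VS, univ_eq_insert_erase k]
    rw [VS_insert hk, upd_self]
    rw [VS_top_indep hk f _ _ _, VS_top_indep hk f _ _ _]
  have e3 : V f (upd s k m) t
      = VS (univ.erase k) f (upd s k (t k)) t - VS (univ.erase k) f (upd s k m) t := by
    conv_lhs => rw [V_eq_VS, univ_eq_insert_erase k]
    rw [VS_insert hk, upd_idem]
  rw [e1, e2, e3]; ring

/-- degenerate boxes have zero volume. -/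
lemma Vdegen (f : Cube d → ℝ) {s t : Cube d} {k : Fin d} (h : s k = t k) :
    V f s t = 0 := by
  have hk : k ∉ (univ : Finset (Fin d)).erase k := Finset.notMem_erase k _
  conv_lhs => rw [V_eq_VS, univ_eq_insert_erase k]
  rw [VS_insert hk, ← h, upd_eq_self]
  ring

end Stmt8
namespace Stmt8

open Finset

variable {d : ℕ} {C : Cube d → ℝ}

lemma upd_comm (x : Cube d) {j k : Fin d} (h : j ≠ k) (a b : unitInterval) :
    upd (upd x k a) j b = upd (upd x j b) k a := by
  funext i
  by_cases hi : i = j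
  · subst hi; simp [upd, h]
  · by_cases hik : i = k
    · simp [upd, hi, hik, Ne.symm h]
    · simp [upd, hi, hik]

lemma czero (hC : IsCopula C) {w : Cube d} {k : Fin d} (h : w k = 0) : C w = 0 := by
  have := hC.2.1 k w
  have hw : etaK ({k} : Finset (Fin d)) w 0 = w := by
    funext j
    by_cases hj : j = k
    · subst hj; simp only [etaK, Finset.mem_singleton, if_true]; exact h.symm ▸ rfl
    · simp [etaK, hj]
  rwa [hw] at this

lemma margin (hC : IsCopula C) {w : Cube d} (k : Fin d) (h : ∀ j, j ≠ k → w j = 1) :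
    C w = (w k : ℝ) := by
  have := hC.2.2 k w
  have hw : etaK ({k} : Finset (Fin d)) 1 w = w := by
    funext j
    by_cases hj : j = k
    · subst hj; simp [etaK]
    · simp only [etaK, Finset.mem_singleton, hj, if_false]; exact (h j hj).symm ▸ rfl
  rwa [hw] at this

lemma C_eq_V0 (hC : IsCopula C) (t : Cube d) : V C 0 t = C t := by
  rw [V]
  rw [Finset.sum_eq_single univ]
  · simp
  · intro K _ hKne
    have : ∃ k, k ∉ K := by
      by_contra h
      push_neg at h
      exact hKne (Finset.eq_univ_iff_forall.mpr h)
    obtain ⟨k, hk⟩ := this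
    have : C (etaK K 0 t) = 0 := czero hC (k := k) (by simp only [etaK, hk, if_false]; rfl)
    rw [this]; ring
  · intro h; exact absurd (Finset.mem_univ _) h

lemma V_nonneg (hC : IsCopula C) {s t : Cube d} (h : s ≤ t) : 0 ≤ V C s t := by
  rw [V]; exact hC.1 s t h

lemma V_top_mono (hC : IsCopula C) {s t t' : Cube d} (hst : s ≤ t) (htt : t ≤ t') :
    V C s t ≤ V C s t' := by
  have aux : ∀ S : Finset (Fin d), V C s t ≤ V C s (etaK S t t') := by
    intro S
    induction S using Finset.induction_on with
    | empty => simp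
    | @insert k S hk ih =>
      rw [etaK_insert]
      set τ := etaK S t t' with hτ
      have hτle : ∀ j, s j ≤ τ j ∧ τ j ≤ t' j := by
        intro j
        by_cases hj : j ∈ S
        · rw [hτ]; rw [etaK_mem _ _ _ hj]
          exact ⟨le_trans (hst j) (htt j), le_refl _⟩
        · rw [hτ]; rw [etaK_not_mem _ _ _ hj]
          exact ⟨hst j, htt j⟩
      have hsplit := Vsplit C s (upd τ k (t' k)) k (τ k)
      have h1 : upd (upd τ k (t' k)) k (τ k) = τ := by rw [upd_idem, upd_eq_self]
      rw [h1] at hsplit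
      have h2 : 0 ≤ V C (upd s k (τ k)) (upd τ k (t' k)) := by
        refine V_nonneg hC fun j => ?_
        by_cases hj : j = k
        · rw [hj, upd_self, upd_self]; exact (hτle k).2
        · rw [upd_other _ _ _ hj, upd_other _ _ _ hj]; exact (hτle j).1
      calc V C s t ≤ V C s τ := ih
        _ ≤ V C s (upd τ k (t' k)) := by rw [hsplit]; linarith
  have := aux univ
  rwa [etaK_univ] at this

lemma V_bot_mono (hC : IsCopula C) {s' s t : Cube d} (hs : s' ≤ s) (hst : s ≤ t) :
    V C s t ≤ V C s' t := by
  have aux : ∀ S : Finset (Fin d), V C s t ≤ V C (etaK S s s') t := by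
    intro S
    induction S using Finset.induction_on with
    | empty => simp
    | @insert k S hk ih =>
      rw [etaK_insert]
      set vv := etaK S s s' with hvv
      have hvvle : ∀ j, s' j ≤ vv j ∧ vv j ≤ t j := by
        intro j
        by_cases hj : j ∈ S
        · rw [hvv, etaK_mem _ _ _ hj]
          exact ⟨le_refl _, le_trans (hs j) (hst j)⟩
        · rw [hvv, etaK_not_mem _ _ _ hj]
          exact ⟨hs j, hst j⟩
      have hsplit := Vsplit C (upd vv k (s' k)) t k (vv k)
      have h1 : upd (upd vv k (s' k)) k (vv k) = vv := by rw [upd_idem, upd_eq_self]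
      rw [h1] at hsplit
      have h2 : 0 ≤ V C (upd vv k (s' k)) (upd t k (vv k)) := by
        refine V_nonneg hC fun j => ?_
        by_cases hj : j = k
        · rw [hj, upd_self, upd_self]; exact (hvvle k).1
        · rw [upd_other _ _ _ hj, upd_other _ _ _ hj]; exact (hvvle j).2
      calc V C s t ≤ V C vv t := ih
        _ ≤ V C (upd vv k (s' k)) t := by rw [hsplit]; linarith
  have := aux univ
  rwa [etaK_univ] at this

lemma C_nonneg (hC : IsCopula C) (t : Cube d) : 0 ≤ C t := by
  rw [← C_eq_V0 hC]
  exact V_nonneg hC fun j => unitInterval.nonneg'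

lemma C_mono (hC : IsCopula C) {s t : Cube d} (h : s ≤ t) : C s ≤ C t := by
  rw [← C_eq_V0 hC, ← C_eq_V0 hC]
  exact V_top_mono hC (fun j => unitInterval.nonneg') h

lemma V_le_Ctop (hC : IsCopula C) {s t : Cube d} (h : s ≤ t) : V C s t ≤ C t := by
  rw [← C_eq_V0 hC]
  exact V_bot_mono hC (fun j => unitInterval.nonneg') h

/-- generic induction lemma: `VS` of a clamped volume function. -/
lemma GIL (C : Cube d → ℝ) (gk : Fin d → unitInterval → unitInterval) (β : Cube d)
    (F : Cube d → ℝ) (hbase : ∀ x : Cube d, F x = V C β (fun k => gk k (x k))) :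
    ∀ (S : Finset (Fin d)) (s t : Cube d),
      VS S F s t = V C (etaK S β (fun k => gk k (s k)))
        (etaK S (fun k => gk k (s k)) (fun k => gk k (t k))) := by
  intro S
  induction S using Finset.induction_on with
  | empty => intro s t; simp [hbase]
  | @insert k S hk ih =>
    intro s t
    rw [VS_insert hk]
    rw [ih s t, ih (upd s k (t k)) t]
    set g : Cube d → Cube d := fun x => (fun j => gk j (x j)) with hg
    have hgb : g (upd s k (t k)) = upd (g s) k (gk k (t k)) := by
      funext j
      by_cases hj : j = k
      · subst hj; simp [hg]
      · simp [hg, upd, hj]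
    set P := etaK S β (g s) with hP
    set Q := etaK S (g s) (g t) with hQ
    have hPb : etaK S β (g (upd s k (t k))) = P := by
      rw [hgb, hP]
      funext j
      by_cases hj : j ∈ S
      · have hjk : j ≠ k := fun h => hk (h ▸ hj)
        simp [etaK, hj, upd, hjk]
      · simp [etaK, hj]
    have hQb : etaK S (g (upd s k (t k))) (g t) = upd Q k (gk k (t k)) := by
      rw [hgb, hQ]
      funext j
      by_cases hj : j ∈ S
      · have hjk : j ≠ k := fun h => hk (h ▸ hj)
        simp [etaK, hj, upd, hjk]
      · by_cases hjk : j = k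
        · subst hjk; simp [etaK, hj, upd]
        · simp [etaK, hj, upd, hjk]
    have hP' : etaK (insert k S) β (g s) = upd P k (gk k (s k)) := by
      rw [etaK_insert, hP]
    have hQ' : etaK (insert k S) (g s) (g t) = upd Q k (gk k (t k)) := by
      rw [etaK_insert, hQ]
    rw [hPb, hQb, hP', hQ']
    have hsplit := Vsplit C P (upd Q k (gk k (t k))) k (gk k (s k))
    have hQk : Q k = gk k (s k) := by simp [hQ, etaK, hk, hg]
    have h1 : upd (upd Q k (gk k (t k))) k (gk k (s k)) = Q := by
      rw [upd_idem, ← hQk, upd_eq_self]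
    rw [h1] at hsplit
    linarith

end Stmt8
namespace Stmt8

open Finset

variable {d : ℕ} {C : Cube d → ℝ}

lemma KILL (hC : IsCopula C) (S : Finset (Fin d)) (s t : Cube d) :
    VS S C s t = V C (etaK S 0 s) (etaK S s t) := by
  have := GIL C (fun _ x => x) 0 C (fun x => (C_eq_V0 hC x).symm) S s t
  simpa using this

lemma VS_C_nonneg (hC : IsCopula C) {S : Finset (Fin d)} {s t : Cube d}
    (h : ∀ k ∈ S, s k ≤ t k) : 0 ≤ VS S C s t := by
  rw [KILL hC]
  refine V_nonneg hC fun j => ?_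
  by_cases hj : j ∈ S
  · rw [etaK_mem _ _ _ hj, etaK_mem _ _ _ hj]; exact h j hj
  · rw [etaK_not_mem _ _ _ hj, etaK_not_mem _ _ _ hj]; exact unitInterval.nonneg'

section ABu
variable (C) (u : Cube d)

/-- mass of `[0, t ∧ u]`. -/
noncomputable def Acl : Cube d → ℝ := fun x => C (x ⊓ u)

/-- mass of `(u, u ∨ t]`. -/
noncomputable def Bcl : Cube d → ℝ := fun x => V C u (u ⊔ x)

end ABu

lemma Acl_apply (u x : Cube d) : Acl C u x = C (x ⊓ u) := rfl
lemma Bcl_apply (u x : Cube d) : Bcl C u x = V C u (u ⊔ x) := rfl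

lemma inf_apply' (x u : Cube d) (k : Fin d) : (x ⊓ u) k = x k ⊓ u k := rfl
lemma sup_apply' (x u : Cube d) (k : Fin d) : (x ⊔ u) k = x k ⊔ u k := rfl

lemma PA (hC : IsCopula C) (u : Cube d) (S : Finset (Fin d)) (s t : Cube d) :
    VS S (Acl C u) s t = V C (etaK S 0 (s ⊓ u)) (etaK S (s ⊓ u) (t ⊓ u)) := by
  have := GIL C (fun k x => x ⊓ u k) 0 (Acl C u)
    (fun x => (C_eq_V0 hC (x ⊓ u)).symm) S s t
  exact this

lemma PB (hC : IsCopula C) (u : Cube d) (S : Finset (Fin d)) (s t : Cube d) :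
    VS S (Bcl C u) s t = V C (etaK S u (u ⊔ s)) (etaK S (u ⊔ s) (u ⊔ t)) := by
  have := GIL C (fun k x => u k ⊔ x) u (Bcl C u) (fun x => rfl) S s t
  exact this

lemma VS_A_nonneg (hC : IsCopula C) (u : Cube d) {S : Finset (Fin d)} {s t : Cube d}
    (h : ∀ k ∈ S, s k ≤ t k) : 0 ≤ VS S (Acl C u) s t := by
  rw [PA hC]
  refine V_nonneg hC fun j => ?_
  by_cases hj : j ∈ S
  · rw [etaK_mem _ _ _ hj, etaK_mem _ _ _ hj]
    exact inf_le_inf_right _ (h j hj)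
  · rw [etaK_not_mem _ _ _ hj, etaK_not_mem _ _ _ hj]; exact unitInterval.nonneg'

lemma VS_B_nonneg (hC : IsCopula C) (u : Cube d) {S : Finset (Fin d)} {s t : Cube d}
    (h : ∀ k ∈ S, s k ≤ t k) : 0 ≤ VS S (Bcl C u) s t := by
  rw [PB hC]
  refine V_nonneg hC fun j => ?_
  by_cases hj : j ∈ S
  · rw [etaK_mem _ _ _ hj, etaK_mem _ _ _ hj]
    exact sup_le_sup_left (h j hj) _
  · rw [etaK_not_mem _ _ _ hj, etaK_not_mem _ _ _ hj]; exact le_sup_left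

/-- two-coordinate VS in explicit form. -/
lemma VS_pair (f : Cube d → ℝ) {k j : Fin d} (h : k ≠ j) (x M : Cube d) :
    VS ({k, j} : Finset (Fin d)) f x M
      = f (upd (upd x k (M k)) j (M j)) - f (upd x k (M k))
        - f (upd x j (M j)) + f x := by
  have hkj : k ∉ ({j} : Finset (Fin d)) := by simp [h]
  have hj0 : j ∉ (∅ : Finset (Fin d)) := by simp
  have e1 : ({k, j} : Finset (Fin d)) = insert k {j} := rfl
  rw [e1, VS_insert hkj]
  have e2 : ({j} : Finset (Fin d)) = insert j ∅ := rfl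
  rw [e2, VS_insert hj0, VS_insert hj0]
  simp only [VS_empty]
  ring

/-- block supermodularity, from pairwise positivity. -/
lemma supermod (Phi : Cube d → ℝ)
    (hpos : ∀ (S : Finset (Fin d)) (s t : Cube d), (∀ k ∈ S, s k ≤ t k) → 0 ≤ VS S Phi s t)
    (k0 : Fin d) {m M : Cube d} (hmM : m ≤ M) :
    Phi (upd M k0 (m k0)) + Phi (upd m k0 (M k0)) ≤ Phi m + Phi M := by
  have key : ∀ S : Finset (Fin d), k0 ∉ S →
      Phi (upd m k0 (M k0)) - Phi m
        ≤ Phi (upd (etaK S m M) k0 (M k0)) - Phi (etaK S m M) := by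
    intro S
    induction S using Finset.induction_on with
    | empty => intro _; simp
    | @insert j S hj ih =>
      intro hk0
      have hk0j : k0 ≠ j := fun h => hk0 (h ▸ Finset.mem_insert_self j S)
      have hk0S : k0 ∉ S := fun h => hk0 (Finset.mem_insert_of_mem h)
      set x := etaK S m M with hx
      have hxM : ∀ k ∈ ({k0, j} : Finset (Fin d)), x k ≤ M k := by
        intro k _
        by_cases hkS : k ∈ S
        · rw [hx, etaK_mem _ _ _ hkS]
        · rw [hx, etaK_not_mem _ _ _ hkS]; exact hmM k
      have hp := hpos {k0, j} x M hxM
      rw [VS_pair Phi hk0j x M] at hp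
      have hins : etaK (insert j S) m M = upd x j (M j) := by rw [etaK_insert, hx]
      rw [hins]
      have hcomm : upd (upd x k0 (M k0)) j (M j) = upd (upd x j (M j)) k0 (M k0) :=
        upd_comm x (Ne.symm hk0j) (M k0) (M j)
      rw [hcomm] at hp
      have := ih hk0S
      linarith
  have h2 := key (univ.erase k0) (Finset.notMem_erase k0 _)
  have e1 : etaK (univ.erase k0) m M = upd M k0 (m k0) := by
    funext j
    by_cases hj : j = k0
    · subst hj; simp [etaK]
    · rw [etaK_mem _ _ _ (Finset.mem_erase.mpr ⟨hj, Finset.mem_univ j⟩), upd_other _ _ _ hj]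
  have e2 : upd (upd M k0 (m k0)) k0 (M k0) = M := by rw [upd_idem, upd_eq_self]
  rw [e1, e2] at h2
  linarith

end Stmt8
namespace Stmt8

open Finset

variable {d : ℕ}

lemma surv_eq (f : Cube d → ℝ) (t : Cube d) :
    survival f t = V f (fun k => unitInterval.symm (t k)) 1 := by
  rw [survival, nuK, V]
  rw [Finset.powerset_univ]
  have hbij : Function.Bijective (fun K : Finset (Fin d) => Kᶜ) :=
    Function.Involutive.bijective (fun K => compl_compl K)
  rw [Fintype.sum_bijective _ hbij _ _ ?_]
  intro L
  have hcard : d - (Lᶜ).card = L.card := by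
    have h1 : (Lᶜ).card = Fintype.card (Fin d) - L.card := Finset.card_compl L
    have h2 : L.card ≤ Fintype.card (Fin d) := Finset.card_le_univ L
    rw [h1, Fintype.card_fin]
    rw [Fintype.card_fin] at h2
    omega
  rw [hcard]
  have harg : (fun k => if k ∈ L then unitInterval.symm (t k)
      else if k ∈ (univ : Finset (Fin d)) then 1 else t k)
      = etaK Lᶜ (fun k => unitInterval.symm (t k)) 1 := by
    funext k
    by_cases hk : k ∈ L
    · have hk' : k ∉ Lᶜ := by simp [hk]
      simp [etaK, hk, hk']
    · have hk' : k ∈ Lᶜ := by simp [hk]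
      simp [etaK, hk, hk']
  rw [harg]

lemma V_linear_comb (f g h i j : Cube d → ℝ) (c1 c2 c3 : ℝ) (s t : Cube d) :
    V (fun x => f x - c1 * g x - c2 * h x + c3 * (i x * j x)) s t
      = V f s t - c1 * V g s t - c2 * V h s t
        + c3 * V (fun x => i x * j x) s t := by
  simp only [V, Finset.mul_sum, ← Finset.sum_add_distrib, ← Finset.sum_sub_distrib]
  exact Finset.sum_congr rfl fun K _ => by ring

lemma V_prod (f g : Cube d → ℝ) (k0 : Fin d)
    (hf : ∀ x y : Cube d, x k0 = y k0 → f x = f y)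
    (hg : ∀ (x : Cube d) (v : unitInterval), g (upd x k0 v) = g x)
    (s t : Cube d) :
    V (fun x => f x * g x) s t
      = (f (upd s k0 (t k0)) - f s) * VS (univ.erase k0) g s t := by
  have hk : k0 ∉ (univ : Finset (Fin d)).erase k0 := Finset.notMem_erase k0 _
  have e0 : V (fun x => f x * g x) s t
      = VS (univ.erase k0) (fun x => f x * g x) (upd s k0 (t k0)) t
        - VS (univ.erase k0) (fun x => f x * g x) s t := by
    conv_lhs => rw [V_eq_VS, univ_eq_insert_erase k0]
    rw [VS_insert hk]
  have key : ∀ x : Cube d, x = s ∨ x = upd s k0 (t k0) →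
      VS (univ.erase k0) (fun y => f y * g y) x t
        = f x * VS (univ.erase k0) g s t := by
    intro x hx
    rw [VS, VS, Finset.mul_sum]
    refine Finset.sum_congr rfl fun K hK => ?_
    have hkK : k0 ∉ K := fun h => hk (Finset.mem_powerset.mp hK h)
    have hfx : f (etaK K x t) = f x := hf _ _ (by rw [etaK_not_mem _ _ _ hkK])
    have hgx : g (etaK K x t) = g (etaK K s t) := by
      rcases hx with rfl | rfl
      · rfl
      · have : etaK K (upd s k0 (t k0)) t = upd (etaK K s t) k0 (t k0) := by
          funext j
          by_cases hj : j ∈ K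
          · have hjk : j ≠ k0 := fun h => hkK (h ▸ hj)
            rw [etaK_mem _ _ _ hj, upd_other _ _ _ hjk, etaK_mem _ _ _ hj]
          · by_cases hjk : j = k0
            · subst hjk; rw [etaK_not_mem _ _ _ hj, upd_self, upd_self]
            · rw [etaK_not_mem _ _ _ hj, upd_other _ _ _ hjk, upd_other _ _ _ hjk,
                etaK_not_mem _ _ _ hj]
        rw [this, hg]
    rw [hfx, hgx]; ring
  rw [e0, key s (Or.inl rfl), key _ (Or.inr rfl)]
  ring

lemma VS_R_comp (k0 : Fin d) (f : Cube d → ℝ) (s t : Cube d) :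
    VS (univ.erase k0) (fun x => f (upd x k0 1)) s t
      = VS (univ.erase k0) f (upd s k0 1) (upd t k0 1) := by
  rw [VS, VS]
  refine Finset.sum_congr rfl fun K hK => ?_
  have hkK : k0 ∉ K := fun h =>
    (Finset.notMem_erase k0 _) (Finset.mem_powerset.mp hK h)
  have harg : upd (etaK K s t) k0 1 = etaK K (upd s k0 1) (upd t k0 1) := by
    funext j
    by_cases hj : j ∈ K
    · have hjk : j ≠ k0 := fun h => hkK (h ▸ hj)
      rw [etaK_mem _ _ _ hj, upd_other _ _ _ hjk, etaK_mem _ _ _ hj, upd_other _ _ _ hjk]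
    · by_cases hjk : j = k0
      · subst hjk
        rw [upd_self, etaK_not_mem _ _ _ hj, upd_self]
      · rw [etaK_not_mem _ _ _ hj, upd_other _ _ _ hjk, etaK_not_mem _ _ _ hj,
          upd_other _ _ _ hjk]
  rw [harg]

end Stmt8
namespace Stmt8

open Finset unitInterval

variable {d : ℕ} {C : Cube d → ℝ}

section Constr

variable (C)

noncomputable def A1f (u : Cube d) (k0 : Fin d) : Cube d → ℝ :=
  fun t => Acl C u (etaK (univ.erase k0) t 1)

noncomputable def Arf (u : Cube d) (k0 : Fin d) : Cube d → ℝ :=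
  fun t => Acl C u (upd t k0 1)

noncomputable def B1f (u : Cube d) (k0 : Fin d) : Cube d → ℝ :=
  fun t => Bcl C u (etaK (univ.erase k0) t 1)

noncomputable def Brf (u : Cube d) (k0 : Fin d) : Cube d → ℝ :=
  fun t => Bcl C u (upd t k0 1)

noncomputable def epsf (u : Cube d) : ℝ := min (C u) (V C u 1) / 2

noncomputable def DDf (u : Cube d) (k0 : Fin d) : Cube d → ℝ := fun t =>
  C t - (epsf C u / C u) * Acl C u t - (epsf C u / V C u 1) * Bcl C u t
    + (epsf C u / (C u * V C u 1))
      * (A1f C u k0 t * Brf C u k0 t + B1f C u k0 t * Arf C u k0 t)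

end Constr

variable (hC : IsCopula C) {u : Cube d}

section PtFacts

variable (u)

lemma one_inf (v : Cube d) : (1 : Cube d) ⊓ v = v := by
  funext k; exact inf_eq_right.mpr unitInterval.le_one'

lemma sup_one (v : Cube d) : v ⊔ (1 : Cube d) = (1 : Cube d) := by
  funext k; exact sup_eq_right.mpr unitInterval.le_one'

lemma le_one_cube (v : Cube d) : v ≤ (1 : Cube d) := fun k => unitInterval.le_one'

lemma zero_le_cube (v : Cube d) : (0 : Cube d) ≤ v := fun k => unitInterval.nonneg'

include hC

lemma Acl_nonneg (x : Cube d) : 0 ≤ Acl C u x := C_nonneg hC _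

lemma Acl_le_a (x : Cube d) : Acl C u x ≤ C u := C_mono hC fun k => inf_le_right

lemma Acl_mono {x y : Cube d} (h : x ≤ y) : Acl C u x ≤ Acl C u y :=
  C_mono hC fun k => inf_le_inf_right _ (h k)

lemma Acl_one : Acl C u 1 = C u := by rw [Acl_apply, one_inf]

lemma Acl_zero {x : Cube d} (k : Fin d) (h : x k = 0) : Acl C u x = 0 := by
  refine czero hC (k := k) ?_
  rw [inf_apply', h]
  exact inf_eq_left.mpr unitInterval.nonneg'

lemma Bcl_nonneg (x : Cube d) : 0 ≤ Bcl C u x :=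
  V_nonneg hC fun k => le_sup_left

lemma Bcl_le_b (x : Cube d) : Bcl C u x ≤ V C u 1 :=
  V_top_mono hC (fun k => le_sup_left) (le_one_cube _)

lemma Bcl_mono {x y : Cube d} (h : x ≤ y) : Bcl C u x ≤ Bcl C u y :=
  V_top_mono hC (fun k => le_sup_left) (fun k => sup_le_sup_left (h k) _)

lemma Bcl_one : Bcl C u 1 = V C u 1 := by rw [Bcl_apply, sup_one]

lemma Bcl_zero {x : Cube d} (k : Fin d) (h : x k ≤ u k) : Bcl C u x = 0 :=
  Vdegen C (k := k) (by rw [sup_apply']; exact (sup_eq_left.mpr h).symm)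

end PtFacts

section Values

variable (C) (u : Cube d) (k0 : Fin d)

lemma A1f_val (t : Cube d) : A1f C u k0 t = C (upd u k0 (t k0 ⊓ u k0)) := by
  rw [A1f, Acl_apply]
  congr 1
  funext j
  by_cases hj : j = k0
  · rw [hj]
    rw [inf_apply', etaK_not_mem _ _ _ (Finset.notMem_erase k0 _), upd_self]
  · rw [inf_apply', etaK_mem _ _ _ (Finset.mem_erase.mpr ⟨hj, Finset.mem_univ j⟩),
      upd_other _ _ _ hj]
    exact inf_eq_right.mpr unitInterval.le_one'

lemma Arf_val (t : Cube d) : Arf C u k0 t = C (upd (t ⊓ u) k0 (u k0)) := by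
  rw [Arf, Acl_apply]
  congr 1
  funext j
  by_cases hj : j = k0
  · rw [hj]
    rw [inf_apply', upd_self, upd_self]
    exact inf_eq_right.mpr unitInterval.le_one'
  · rw [inf_apply', upd_other _ _ _ hj, upd_other _ _ _ hj, inf_apply']

lemma B1f_val (t : Cube d) : B1f C u k0 t = V C u (upd 1 k0 (u k0 ⊔ t k0)) := by
  rw [B1f, Bcl_apply]
  congr 1
  funext j
  by_cases hj : j = k0
  · rw [hj]
    rw [sup_apply', etaK_not_mem _ _ _ (Finset.notMem_erase k0 _), upd_self]
  · rw [sup_apply', etaK_mem _ _ _ (Finset.mem_erase.mpr ⟨hj, Finset.mem_univ j⟩),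
      upd_other _ _ _ hj]
    exact sup_eq_right.mpr unitInterval.le_one'

lemma Brf_val (t : Cube d) : Brf C u k0 t = V C u (upd (u ⊔ t) k0 1) := by
  rw [Brf, Bcl_apply]
  congr 1
  funext j
  by_cases hj : j = k0
  · rw [hj]
    rw [sup_apply', upd_self, upd_self]
    exact sup_eq_right.mpr unitInterval.le_one'
  · rw [sup_apply', upd_other _ _ _ hj, upd_other _ _ _ hj, sup_apply']

end Values

end Stmt8
namespace Stmt8

open Finset unitInterval

variable {d : ℕ} {C : Cube d → ℝ}

lemma V_DD_expand (u : Cube d) (k0 : Fin d) (s t : Cube d) :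
    V (DDf C u k0) s t
      = V C s t - (epsf C u / C u) * V (Acl C u) s t
        - (epsf C u / V C u 1) * V (Bcl C u) s t
        + (epsf C u / (C u * V C u 1))
          * (V (fun x => A1f C u k0 x * Brf C u k0 x) s t
             + V (fun x => B1f C u k0 x * Arf C u k0 x) s t) := by
  simp only [V, DDf, Finset.mul_sum, ← Finset.sum_add_distrib, ← Finset.sum_sub_distrib]
  exact Finset.sum_congr rfl fun K _ => by ring

lemma VAcl_eq (u : Cube d) (s t : Cube d) :
    V (Acl C u) s t = V C (s ⊓ u) (t ⊓ u) := by
  unfold V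
  refine Finset.sum_congr rfl fun K _ => ?_
  rw [Acl_apply]
  congr 2
  funext j
  by_cases hj : j ∈ K
  · rw [inf_apply', etaK_mem _ _ _ hj, etaK_mem _ _ _ hj, inf_apply']
  · rw [inf_apply', etaK_not_mem _ _ _ hj, etaK_not_mem _ _ _ hj, inf_apply']

lemma VBcl_eq (hC : IsCopula C) (u : Cube d) (s t : Cube d) :
    V (Bcl C u) s t = V C (u ⊔ s) (u ⊔ t) := by
  rw [V_eq_VS, PB hC u univ s t, etaK_univ, etaK_univ]

lemma VAcl_nonneg (hC : IsCopula C) (u : Cube d) {s t : Cube d} (hst : s ≤ t) :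
    0 ≤ V (Acl C u) s t := by
  rw [VAcl_eq]
  exact V_nonneg hC fun k => inf_le_inf_right _ (hst k)

lemma VBcl_nonneg (hC : IsCopula C) (u : Cube d) {s t : Cube d} (hst : s ≤ t) :
    0 ≤ V (Bcl C u) s t := by
  rw [VBcl_eq hC]
  exact V_nonneg hC fun k => sup_le_sup_left (hst k) _

lemma VAcl_le (hC : IsCopula C) (u : Cube d) {s t : Cube d} (hst : s ≤ t) :
    V (Acl C u) s t ≤ V C s t := by
  rw [VAcl_eq]
  by_cases hex : ∃ k, u k ≤ s k
  · obtain ⟨k, hk⟩ := hex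
    have hdeg : (s ⊓ u) k = (t ⊓ u) k := by
      rw [inf_apply', inf_apply', inf_eq_right.mpr hk,
        inf_eq_right.mpr (le_trans hk (hst k))]
    rw [Vdegen C hdeg]
    exact V_nonneg hC hst
  · push_neg at hex
    have hsu : s ⊓ u = s := funext fun k => inf_eq_left.mpr (le_of_lt (hex k))
    rw [hsu]
    exact V_top_mono hC (fun k => le_inf (hst k) (le_of_lt (hex k))) fun k => inf_le_left

lemma VBcl_le (hC : IsCopula C) (u : Cube d) {s t : Cube d} (hst : s ≤ t) :
    V (Bcl C u) s t ≤ V C s t := by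
  rw [VBcl_eq hC]
  by_cases hex : ∃ k, t k ≤ u k
  · obtain ⟨k, hk⟩ := hex
    have hdeg : (u ⊔ s) k = (u ⊔ t) k := by
      rw [sup_apply', sup_apply', sup_eq_left.mpr (le_trans (hst k) hk),
        sup_eq_left.mpr hk]
    rw [Vdegen C hdeg]
    exact V_nonneg hC hst
  · push_neg at hex
    have hut : u ⊔ t = t := funext fun k => sup_eq_right.mpr (le_of_lt (hex k))
    rw [hut]
    exact V_bot_mono hC (fun k => le_sup_right)
      (fun k => sup_le (le_of_lt (hex k)) (hst k))

lemma Vprod1_eq (u : Cube d) (k0 : Fin d) (s t : Cube d) :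
    V (fun x => A1f C u k0 x * Brf C u k0 x) s t
      = (A1f C u k0 (upd s k0 (t k0)) - A1f C u k0 s)
        * VS (univ.erase k0) (Bcl C u) (upd s k0 1) (upd t k0 1) := by
  have hf : ∀ x y : Cube d, x k0 = y k0 → A1f C u k0 x = A1f C u k0 y := by
    intro x y h
    rw [A1f_val, A1f_val, h]
  have hg : ∀ (x : Cube d) (v : unitInterval),
      Brf C u k0 (upd x k0 v) = Brf C u k0 x := by
    intro x v
    show Bcl C u (upd (upd x k0 v) k0 1) = Bcl C u (upd x k0 1)
    rw [upd_idem]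
  rw [V_prod _ _ k0 hf hg s t]
  congr 1
  exact VS_R_comp k0 (Bcl C u) s t

lemma Vprod2_eq (u : Cube d) (k0 : Fin d) (s t : Cube d) :
    V (fun x => B1f C u k0 x * Arf C u k0 x) s t
      = (B1f C u k0 (upd s k0 (t k0)) - B1f C u k0 s)
        * VS (univ.erase k0) (Acl C u) (upd s k0 1) (upd t k0 1) := by
  have hf : ∀ x y : Cube d, x k0 = y k0 → B1f C u k0 x = B1f C u k0 y := by
    intro x y h
    rw [B1f_val, B1f_val, h]
  have hg : ∀ (x : Cube d) (v : unitInterval),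
      Arf C u k0 (upd x k0 v) = Arf C u k0 x := by
    intro x v
    show Acl C u (upd (upd x k0 v) k0 1) = Acl C u (upd x k0 1)
    rw [upd_idem]
  rw [V_prod _ _ k0 hf hg s t]
  congr 1
  exact VS_R_comp k0 (Acl C u) s t

lemma eps_nonneg (hC : IsCopula C) (u : Cube d) : 0 ≤ epsf C u := by
  rw [epsf]
  have h1 := C_nonneg hC u
  have h2 := V_nonneg hC (le_one_cube u)
  have := le_min h1 h2
  linarith

lemma Vprod1_nonneg (hC : IsCopula C) (u : Cube d) (k0 : Fin d) {s t : Cube d}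
    (hst : s ≤ t) : 0 ≤ V (fun x => A1f C u k0 x * Brf C u k0 x) s t := by
  rw [Vprod1_eq]
  refine mul_nonneg ?_ ?_
  · rw [A1f_val, A1f_val, upd_self, sub_nonneg]
    refine C_mono hC fun j => ?_
    by_cases hj : j = k0
    · rw [hj, upd_self, upd_self]
      exact inf_le_inf_right _ (hst k0)
    · rw [upd_other _ _ _ hj, upd_other _ _ _ hj]
  · refine VS_B_nonneg hC u fun k hk => ?_
    have hkk0 : k ≠ k0 := (Finset.mem_erase.mp hk).1
    rw [upd_other _ _ _ hkk0, upd_other _ _ _ hkk0]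
    exact hst k

lemma Vprod2_nonneg (hC : IsCopula C) (u : Cube d) (k0 : Fin d) {s t : Cube d}
    (hst : s ≤ t) : 0 ≤ V (fun x => B1f C u k0 x * Arf C u k0 x) s t := by
  rw [Vprod2_eq]
  refine mul_nonneg ?_ ?_
  · rw [B1f_val, B1f_val, upd_self, sub_nonneg]
    refine V_top_mono hC (fun j => ?_) (fun j => ?_)
    · by_cases hj : j = k0
      · rw [hj, upd_self]; exact le_sup_left
      · rw [upd_other _ _ _ hj]; exact unitInterval.le_one'
    · by_cases hj : j = k0
      · rw [hj, upd_self, upd_self]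
        exact sup_le_sup_left (hst k0) _
      · rw [upd_other _ _ _ hj, upd_other _ _ _ hj]
  · refine VS_A_nonneg hC u fun k hk => ?_
    have hkk0 : k ≠ k0 := (Finset.mem_erase.mp hk).1
    rw [upd_other _ _ _ hkk0, upd_other _ _ _ hkk0]
    exact hst k

lemma DD_boxpos (hC : IsCopula C) (u : Cube d) (k0 : Fin d)
    (ha : 0 < C u) (hb : 0 < V C u 1) {s t : Cube d} (hst : s ≤ t) :
    0 ≤ V (DDf C u k0) s t := by
  rw [V_DD_expand]
  have heps := eps_nonneg hC u
  have h2a : 2 * epsf C u ≤ C u := by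
    rw [epsf]
    have := min_le_left (C u) (V C u 1)
    linarith
  have h2b : 2 * epsf C u ≤ V C u 1 := by
    rw [epsf]
    have := min_le_right (C u) (V C u 1)
    linarith
  have hVA0 := VAcl_nonneg hC u hst
  have hVB0 := VBcl_nonneg hC u hst
  have hVAle := VAcl_le hC u hst
  have hVBle := VBcl_le hC u hst
  have hP1 := Vprod1_nonneg hC u k0 hst
  have hP2 := Vprod2_nonneg hC u k0 hst
  have hc3 : 0 ≤ epsf C u / (C u * V C u 1) :=
    div_nonneg heps (le_of_lt (mul_pos ha hb))
  have ht1 : epsf C u / C u * V (Acl C u) s t ≤ 1 / 2 * V (Acl C u) s t := by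
    refine mul_le_mul_of_nonneg_right ?_ hVA0
    rw [div_le_iff₀ ha]
    linarith
  have ht2 : epsf C u / V C u 1 * V (Bcl C u) s t ≤ 1 / 2 * V (Bcl C u) s t := by
    refine mul_le_mul_of_nonneg_right ?_ hVB0
    rw [div_le_iff₀ hb]
    linarith
  have ht3 : 0 ≤ epsf C u / (C u * V C u 1)
      * (V (fun x => A1f C u k0 x * Brf C u k0 x) s t
         + V (fun x => B1f C u k0 x * Arf C u k0 x) s t) :=
    mul_nonneg hc3 (by linarith)
  linarith

end Stmt8
namespace Stmt8

open Finset unitInterval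

variable {d : ℕ} {C : Cube d → ℝ}

lemma DD_zero (hC : IsCopula C) (u : Cube d) (k0 : Fin d) (k : Fin d) (w : Cube d) :
    DDf C u k0 (etaK {k} w 0) = 0 := by
  set x : Cube d := etaK {k} w 0 with hxdef
  have hx : x k = 0 := by
    rw [hxdef, etaK_mem _ _ _ (Finset.mem_singleton_self k)]
    rfl
  have hCx : C x = 0 := czero hC hx
  have hAx : Acl C u x = 0 := Acl_zero hC u k hx
  have hBx : Bcl C u x = 0 := Bcl_zero hC u k (by rw [hx]; exact unitInterval.nonneg')
  by_cases hk : k = k0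
  · have hA1 : A1f C u k0 x = 0 := by
      rw [A1f_val]
      refine czero hC (k := k0) ?_
      rw [upd_self, ← hk, hx]
      exact inf_eq_left.mpr unitInterval.nonneg'
    have hB1 : B1f C u k0 x = 0 := by
      rw [B1f_val]
      refine Vdegen C (k := k0) ?_
      rw [upd_self, ← hk, hx]
      exact (sup_eq_left.mpr unitInterval.nonneg').symm
    rw [DDf, hCx, hAx, hBx, hA1, hB1]
    ring
  · have hkk : k ≠ k0 := hk
    have hBr : Brf C u k0 x = 0 := by
      show Bcl C u (upd x k0 1) = 0
      exact Bcl_zero hC u k (by rw [upd_other _ _ _ hkk, hx]; exact unitInterval.nonneg')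
    have hAr : Arf C u k0 x = 0 := by
      show Acl C u (upd x k0 1) = 0
      exact Acl_zero hC u k (by rw [upd_other _ _ _ hkk, hx])
    rw [DDf, hCx, hAx, hBx, hBr, hAr]
    ring

lemma DD_margin (hC : IsCopula C) (u : Cube d) (k0 : Fin d)
    (ha : 0 < C u) (hb : 0 < V C u 1) (k : Fin d) (w : Cube d) :
    DDf C u k0 (etaK {k} 1 w) = (w k : ℝ) := by
  set x : Cube d := etaK {k} 1 w with hxdef
  have hx1 : ∀ j, j ≠ k → x j = 1 := by
    intro j hj
    rw [hxdef, etaK_not_mem _ _ _ (by simp [hj])]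
    rfl
  have hCx : C x = (w k : ℝ) := hC.2.2 k w
  have hane : C u ≠ 0 := ne_of_gt ha
  have hbne : V C u 1 ≠ 0 := ne_of_gt hb
  by_cases hk : k = k0
  · have e1 : etaK (univ.erase k0) x 1 = x := by
      funext j
      by_cases hj : j = k0
      · rw [hj, etaK_not_mem _ _ _ (Finset.notMem_erase k0 _)]
      · rw [etaK_mem _ _ _ (Finset.mem_erase.mpr ⟨hj, Finset.mem_univ j⟩),
          hx1 j (by rw [hk]; exact hj)]
        rfl
    have e2 : upd x k0 1 = 1 := by
      funext j
      by_cases hj : j = k0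
      · rw [hj, upd_self]; rfl
      · rw [upd_other _ _ _ hj, hx1 j (by rw [hk]; exact hj)]
        rfl
    have hA1 : A1f C u k0 x = Acl C u x := by rw [A1f, e1]
    have hB1 : B1f C u k0 x = Bcl C u x := by rw [B1f, e1]
    have hAr : Arf C u k0 x = C u := by rw [Arf]; rw [e2]; exact Acl_one hC u
    have hBr : Brf C u k0 x = V C u 1 := by rw [Brf]; rw [e2]; exact Bcl_one hC u
    rw [DDf, hCx, hA1, hB1, hAr, hBr]
    field_simp
    ring
  · have hk0k : k0 ≠ k := fun h => hk h.symm
    have e1 : etaK (univ.erase k0) x 1 = 1 := by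
      funext j
      by_cases hj : j = k0
      · rw [hj, etaK_not_mem _ _ _ (Finset.notMem_erase k0 _), hx1 k0 hk0k]
        rfl
      · rw [etaK_mem _ _ _ (Finset.mem_erase.mpr ⟨hj, Finset.mem_univ j⟩)]
    have e2 : upd x k0 1 = x := by
      funext j
      by_cases hj : j = k0
      · rw [hj, upd_self, hx1 k0 hk0k]
      · rw [upd_other _ _ _ hj]
    have hA1 : A1f C u k0 x = C u := by rw [A1f, e1]; exact Acl_one hC u
    have hB1 : B1f C u k0 x = V C u 1 := by rw [B1f, e1]; exact Bcl_one hC u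
    have hAr : Arf C u k0 x = Acl C u x := by rw [Arf, e2]
    have hBr : Brf C u k0 x = Bcl C u x := by rw [Brf, e2]
    rw [DDf, hCx, hA1, hB1, hAr, hBr]
    field_simp
    ring

lemma DD_at_u (hC : IsCopula C) (u : Cube d) (k0 k1 : Fin d) (hk1 : k1 ≠ k0)
    (ha : 0 < C u) (hb : 0 < V C u 1) :
    DDf C u k0 u = C u - epsf C u := by
  have hane : C u ≠ 0 := ne_of_gt ha
  have hbne : V C u 1 ≠ 0 := ne_of_gt hb
  have hA : Acl C u u = C u := by rw [Acl_apply, inf_idem]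
  have hB : Bcl C u u = 0 := Bcl_zero hC u k0 (le_refl _)
  have hB1 : B1f C u k0 u = 0 := by
    rw [B1f_val]
    refine Vdegen C (k := k0) ?_
    rw [upd_self]
    exact (sup_idem _).symm
  have hBr : Brf C u k0 u = 0 := by
    rw [Brf_val]
    refine Vdegen C (k := k1) ?_
    rw [upd_other _ _ _ hk1, sup_apply', sup_idem]
  rw [DDf, hA, hB, hB1, hBr]
  field_simp
  ring

end Stmt8
namespace Stmt8

open Finset unitInterval

variable {d : ℕ} {C : Cube d → ℝ}

lemma fretchetA (hC : IsCopula C) (u : Cube d) (k0 : Fin d) (t : Cube d) :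
    A1f C u k0 t + Arf C u k0 t ≤ Acl C u t + C u := by
  have h := supermod C (fun S s t h => VS_C_nonneg hC h) k0
    (m := t ⊓ u) (M := u) (fun k => inf_le_right)
  rw [A1f_val, Arf_val, Acl_apply]
  have e1 : upd u k0 ((t ⊓ u) k0) = upd u k0 (t k0 ⊓ u k0) := rfl
  rw [e1] at h
  linarith

lemma fretchetB (hC : IsCopula C) (u : Cube d) (k0 : Fin d) (t : Cube d) :
    B1f C u k0 t + Brf C u k0 t ≤ Bcl C u t + V C u 1 := by
  have h := supermod (Bcl C u) (fun S s t h => VS_B_nonneg hC u h) k0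
    (m := u ⊔ t) (M := 1) (le_one_cube _)
  have i1 : Bcl C u (upd 1 k0 ((u ⊔ t) k0)) = B1f C u k0 t := by
    rw [B1f_val, Bcl_apply]
    congr 1
    funext j
    by_cases hj : j = k0
    · rw [hj, sup_apply', upd_self, upd_self, sup_apply', ← sup_assoc, sup_idem]
    · rw [sup_apply', upd_other _ _ _ hj, upd_other _ _ _ hj]
      exact sup_eq_right.mpr unitInterval.le_one'
  have i2 : Bcl C u (upd (u ⊔ t) k0 ((1 : Cube d) k0)) = Brf C u k0 t := by
    rw [Brf_val, Bcl_apply]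
    congr 1
    funext j
    by_cases hj : j = k0
    · rw [hj, sup_apply', upd_self, upd_self]
      exact sup_eq_right.mpr unitInterval.le_one'
    · rw [sup_apply', upd_other _ _ _ hj, upd_other _ _ _ hj, sup_apply', ← sup_assoc,
        sup_idem]
  have i3 : Bcl C u (u ⊔ t) = Bcl C u t := by
    rw [Bcl_apply, Bcl_apply, ← sup_assoc, sup_idem]
  have i4 : Bcl C u 1 = V C u 1 := Bcl_one hC u
  rw [i1, i2, i3, i4] at h
  linarith

lemma dichA1 (hC : IsCopula C) (u : Cube d) (k0 : Fin d) (t : Cube d)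
    (h : 0 < B1f C u k0 t) : A1f C u k0 t = C u := by
  by_cases hle : t k0 ≤ u k0
  · exfalso
    have : B1f C u k0 t = 0 := by
      rw [B1f_val]
      refine Vdegen C (k := k0) ?_
      rw [upd_self, sup_eq_left.mpr hle]
    linarith
  · rw [A1f_val, inf_eq_right.mpr (le_of_lt (not_le.mp hle)), upd_eq_self]

lemma dichAr (hC : IsCopula C) (u : Cube d) (k0 : Fin d) (t : Cube d)
    (h : 0 < Brf C u k0 t) : Arf C u k0 t = C u := by
  by_cases hall : ∀ j, j ≠ k0 → u j < t j
  · rw [Arf_val]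
    have : upd (t ⊓ u) k0 (u k0) = u := by
      funext j
      by_cases hj : j = k0
      · rw [hj, upd_self]
      · rw [upd_other _ _ _ hj, inf_apply', inf_eq_right.mpr (le_of_lt (hall j hj))]
    rw [this]
  · exfalso
    push_neg at hall
    obtain ⟨j, hj, hle⟩ := hall
    have : Brf C u k0 t = 0 := by
      rw [Brf_val]
      refine Vdegen C (k := j) ?_
      rw [upd_other _ _ _ hj, sup_apply', sup_eq_left.mpr hle]
    linarith

lemma A1f_le (hC : IsCopula C) (u : Cube d) (k0 : Fin d) (t : Cube d) :
    A1f C u k0 t ≤ C u := Acl_le_a hC u _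

lemma A1f_nonneg (hC : IsCopula C) (u : Cube d) (k0 : Fin d) (t : Cube d) :
    0 ≤ A1f C u k0 t := Acl_nonneg hC u _

lemma Arf_le (hC : IsCopula C) (u : Cube d) (k0 : Fin d) (t : Cube d) :
    Arf C u k0 t ≤ C u := Acl_le_a hC u _

lemma Arf_nonneg (hC : IsCopula C) (u : Cube d) (k0 : Fin d) (t : Cube d) :
    0 ≤ Arf C u k0 t := Acl_nonneg hC u _

lemma B1f_le (hC : IsCopula C) (u : Cube d) (k0 : Fin d) (t : Cube d) :
    B1f C u k0 t ≤ V C u 1 := Bcl_le_b hC u _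

lemma B1f_nonneg (hC : IsCopula C) (u : Cube d) (k0 : Fin d) (t : Cube d) :
    0 ≤ B1f C u k0 t := Bcl_nonneg hC u _

lemma Brf_le (hC : IsCopula C) (u : Cube d) (k0 : Fin d) (t : Cube d) :
    Brf C u k0 t ≤ V C u 1 := Bcl_le_b hC u _

lemma Brf_nonneg (hC : IsCopula C) (u : Cube d) (k0 : Fin d) (t : Cube d) :
    0 ≤ Brf C u k0 t := Bcl_nonneg hC u _

lemma key_ineq (hC : IsCopula C) (u : Cube d) (k0 : Fin d)
    (ha : 0 < C u) (hb : 0 < V C u 1) (t : Cube d) :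
    A1f C u k0 t * Brf C u k0 t + B1f C u k0 t * Arf C u k0 t
      ≤ V C u 1 * Acl C u t + C u * Bcl C u t := by
  have hFA := fretchetA hC u k0 t
  have hFB := fretchetB hC u k0 t
  have hA0 := Acl_nonneg hC u t
  have hB0 := Bcl_nonneg hC u t
  by_cases h1 : 0 < B1f C u k0 t
  · by_cases h2 : 0 < Brf C u k0 t
    · have e1 := dichA1 hC u k0 t h1
      have e2 := dichAr hC u k0 t h2
      rw [e1, e2] at hFA ⊢
      have haA : C u ≤ Acl C u t := by linarith
      have m1 : C u * (B1f C u k0 t + Brf C u k0 t)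
          ≤ C u * (Bcl C u t + V C u 1) := mul_le_mul_of_nonneg_left hFB ha.le
      have m2 : C u * V C u 1 ≤ Acl C u t * V C u 1 :=
        mul_le_mul_of_nonneg_right haA hb.le
      nlinarith [m1, m2]
    · have h2' : Brf C u k0 t = 0 := le_antisymm (not_lt.mp h2) (Brf_nonneg hC u k0 t)
      have e1 := dichA1 hC u k0 t h1
      rw [e1] at hFA
      have hArA : Arf C u k0 t ≤ Acl C u t := by linarith
      have m1 : B1f C u k0 t * Arf C u k0 t ≤ V C u 1 * Acl C u t :=
        mul_le_mul (B1f_le hC u k0 t) hArA (Arf_nonneg hC u k0 t) hb.le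
      have m2 : 0 ≤ C u * Bcl C u t := mul_nonneg ha.le hB0
      rw [h2']
      nlinarith [m1, m2, A1f_le hC u k0 t]
  · have h1' : B1f C u k0 t = 0 := le_antisymm (not_lt.mp h1) (B1f_nonneg hC u k0 t)
    by_cases h2 : 0 < Brf C u k0 t
    · have e2 := dichAr hC u k0 t h2
      rw [e2] at hFA
      have hA1A : A1f C u k0 t ≤ Acl C u t := by linarith
      have m1 : A1f C u k0 t * Brf C u k0 t ≤ Acl C u t * V C u 1 :=
        mul_le_mul hA1A (Brf_le hC u k0 t) (Brf_nonneg hC u k0 t) hA0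
      have m2 : 0 ≤ C u * Bcl C u t := mul_nonneg ha.le hB0
      rw [h1']
      nlinarith [m1, m2]
    · have h2' : Brf C u k0 t = 0 := le_antisymm (not_lt.mp h2) (Brf_nonneg hC u k0 t)
      rw [h1', h2']
      have m1 : 0 ≤ V C u 1 * Acl C u t := mul_nonneg hb.le hA0
      have m2 : 0 ≤ C u * Bcl C u t := mul_nonneg ha.le hB0
      nlinarith [m1, m2]

lemma DD_le_C (hC : IsCopula C) (u : Cube d) (k0 : Fin d)
    (ha : 0 < C u) (hb : 0 < V C u 1) (t : Cube d) :
    DDf C u k0 t ≤ C t := by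
  have hkey := key_ineq hC u k0 ha hb t
  have heps := eps_nonneg hC u
  have hc3 : 0 ≤ epsf C u / (C u * V C u 1) :=
    div_nonneg heps (mul_pos ha hb).le
  have hm := mul_le_mul_of_nonneg_left hkey hc3
  have hid : epsf C u / (C u * V C u 1) * (V C u 1 * Acl C u t + C u * Bcl C u t)
      = epsf C u / C u * Acl C u t + epsf C u / V C u 1 * Bcl C u t := by
    field_simp
  rw [hid] at hm
  simp only [DDf]
  linarith

end Stmt8
namespace Stmt8

open Finset unitInterval

variable {d : ℕ} {C : Cube d → ℝ}

lemma upd_cube_one (k0 : Fin d) : upd (1 : Cube d) k0 1 = 1 := by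
  funext j
  by_cases hj : j = k0
  · rw [hj, upd_self]; rfl
  · rw [upd_other _ _ _ hj]

/-- `QA = V C ((w ⊓ u)[k0 ↦ 0]) u`. -/
noncomputable def QA (C : Cube d → ℝ) (u : Cube d) (k0 : Fin d) (w : Cube d) : ℝ :=
  V C (upd (w ⊓ u) k0 0) u

/-- `QB = V C ((u ⊔ w)[k0 ↦ u k0]) 1`. -/
noncomputable def QB (C : Cube d → ℝ) (u : Cube d) (k0 : Fin d) (w : Cube d) : ℝ :=
  V C (upd (u ⊔ w) k0 (u k0)) 1

section Surv

variable (hC : IsCopula C) (u : Cube d) (k0 : Fin d) (w : Cube d)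

include hC

lemma survVA : V (Acl C u) w 1 = V C (w ⊓ u) u := by
  rw [VAcl_eq, one_inf]

lemma survVB : V (Bcl C u) w 1 = V C (u ⊔ w) 1 := by
  rw [VBcl_eq hC, sup_one]

lemma survP1 :
    V (fun x => A1f C u k0 x * Brf C u k0 x) w 1
      = (C u - A1f C u k0 w) * QB C u k0 w := by
  rw [Vprod1_eq]
  have e1 : A1f C u k0 (upd w k0 ((1 : Cube d) k0)) = C u := by
    rw [A1f_val]
    have e : upd u k0 (upd w k0 ((1 : Cube d) k0) k0 ⊓ u k0) = u := by
      funext j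
      by_cases hj : j = k0
      · rw [hj, upd_self, upd_self]
        exact inf_eq_right.mpr unitInterval.le_one'
      · rw [upd_other _ _ _ hj]
    rw [e]
  have hVS : VS (univ.erase k0) (Bcl C u) (upd w k0 1) (upd (1 : Cube d) k0 1)
      = QB C u k0 w := by
    rw [upd_cube_one, PB hC u (univ.erase k0) (upd w k0 1) 1]
    have c1 : etaK (univ.erase k0) u (u ⊔ upd w k0 1) = upd (u ⊔ w) k0 (u k0) := by
      funext j
      by_cases hj : j = k0
      · rw [hj, etaK_not_mem _ _ _ (Finset.notMem_erase k0 _), upd_self]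
      · rw [etaK_mem _ _ _ (Finset.mem_erase.mpr ⟨hj, Finset.mem_univ j⟩),
          upd_other _ _ _ hj, sup_apply', upd_other _ _ _ hj, sup_apply']
    have c2 : etaK (univ.erase k0) (u ⊔ upd w k0 1) (u ⊔ 1) = 1 := by
      funext j
      by_cases hj : j = k0
      · rw [hj, etaK_not_mem _ _ _ (Finset.notMem_erase k0 _), sup_apply', upd_self]
        exact sup_eq_right.mpr unitInterval.le_one'
      · rw [etaK_mem _ _ _ (Finset.mem_erase.mpr ⟨hj, Finset.mem_univ j⟩), sup_apply']
        exact sup_eq_right.mpr unitInterval.le_one'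
    rw [c1, c2, QB]
  rw [e1, hVS]

lemma survP2 :
    V (fun x => B1f C u k0 x * Arf C u k0 x) w 1
      = (V C u 1 - B1f C u k0 w) * QA C u k0 w := by
  rw [Vprod2_eq]
  have e1 : B1f C u k0 (upd w k0 ((1 : Cube d) k0)) = V C u 1 := by
    rw [B1f_val]
    have e : upd (1 : Cube d) k0 (u k0 ⊔ upd w k0 ((1 : Cube d) k0) k0)
        = (1 : Cube d) := by
      funext j
      by_cases hj : j = k0
      · rw [hj, upd_self, upd_self]
        exact sup_eq_right.mpr unitInterval.le_one'
      · rw [upd_other _ _ _ hj]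
    rw [e]
  have hVS : VS (univ.erase k0) (Acl C u) (upd w k0 1) (upd (1 : Cube d) k0 1)
      = QA C u k0 w := by
    rw [upd_cube_one, PA hC u (univ.erase k0) (upd w k0 1) 1]
    have c1 : etaK (univ.erase k0) 0 (upd w k0 1 ⊓ u) = upd (w ⊓ u) k0 0 := by
      funext j
      by_cases hj : j = k0
      · rw [hj, etaK_not_mem _ _ _ (Finset.notMem_erase k0 _), upd_self]
        rfl
      · rw [etaK_mem _ _ _ (Finset.mem_erase.mpr ⟨hj, Finset.mem_univ j⟩),
          upd_other _ _ _ hj, inf_apply', upd_other _ _ _ hj, inf_apply']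
    have c2 : etaK (univ.erase k0) (upd w k0 1 ⊓ u) ((1 : Cube d) ⊓ u) = u := by
      funext j
      by_cases hj : j = k0
      · rw [hj, etaK_not_mem _ _ _ (Finset.notMem_erase k0 _), inf_apply', upd_self]
        exact inf_eq_right.mpr unitInterval.le_one'
      · rw [etaK_mem _ _ _ (Finset.mem_erase.mpr ⟨hj, Finset.mem_univ j⟩), inf_apply']
        exact inf_eq_right.mpr unitInterval.le_one'
    rw [c1, c2, QA]
  rw [e1, hVS]

lemma QA_nonneg : 0 ≤ QA C u k0 w := by
  refine V_nonneg hC fun j => ?_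
  by_cases hj : j = k0
  · rw [hj, upd_self]; exact unitInterval.nonneg'
  · rw [upd_other _ _ _ hj, inf_apply']; exact inf_le_right

lemma QA_le : QA C u k0 w ≤ C u := by
  refine V_le_Ctop hC fun j => ?_
  by_cases hj : j = k0
  · rw [hj, upd_self]; exact unitInterval.nonneg'
  · rw [upd_other _ _ _ hj, inf_apply']; exact inf_le_right

lemma QB_nonneg : 0 ≤ QB C u k0 w := by
  refine V_nonneg hC fun j => ?_
  exact unitInterval.le_one'

lemma QB_le : QB C u k0 w ≤ V C u 1 := by
  refine V_bot_mono hC (fun j => ?_) (fun j => unitInterval.le_one')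
  by_cases hj : j = k0
  · rw [hj, upd_self]
  · rw [upd_other _ _ _ hj, sup_apply']; exact le_sup_left

lemma frA' : QA C u k0 w ≤ V C (w ⊓ u) u + A1f C u k0 w := by
  have hsplit := Vsplit C (upd (w ⊓ u) k0 0) u k0 ((w ⊓ u) k0)
  have h1 : upd (upd (w ⊓ u) k0 0) k0 ((w ⊓ u) k0) = w ⊓ u := by
    rw [upd_idem, upd_eq_self]
  rw [h1] at hsplit
  have h2 : V C (upd (w ⊓ u) k0 0) (upd u k0 ((w ⊓ u) k0)) ≤ A1f C u k0 w := by
    have hle : V C (upd (w ⊓ u) k0 0) (upd u k0 ((w ⊓ u) k0))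
        ≤ C (upd u k0 ((w ⊓ u) k0)) := by
      refine V_le_Ctop hC fun j => ?_
      by_cases hj : j = k0
      · rw [hj, upd_self, upd_self]; exact unitInterval.nonneg'
      · rw [upd_other _ _ _ hj, upd_other _ _ _ hj, inf_apply']; exact inf_le_right
    have : C (upd u k0 ((w ⊓ u) k0)) = A1f C u k0 w := by rw [A1f_val]; rfl
    linarith
  rw [QA]
  linarith

lemma frB' : QB C u k0 w ≤ V C (u ⊔ w) 1 + B1f C u k0 w := by
  have hsplit := Vsplit C (upd (u ⊔ w) k0 (u k0)) 1 k0 ((u ⊔ w) k0)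
  have h1 : upd (upd (u ⊔ w) k0 (u k0)) k0 ((u ⊔ w) k0) = u ⊔ w := by
    rw [upd_idem, upd_eq_self]
  rw [h1] at hsplit
  have h2 : V C (upd (u ⊔ w) k0 (u k0)) (upd 1 k0 ((u ⊔ w) k0)) ≤ B1f C u k0 w := by
    have hle : V C (upd (u ⊔ w) k0 (u k0)) (upd 1 k0 ((u ⊔ w) k0))
        ≤ V C u (upd 1 k0 ((u ⊔ w) k0)) := by
      refine V_bot_mono hC (fun j => ?_) (fun j => ?_)
      · by_cases hj : j = k0
        · rw [hj, upd_self]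
        · rw [upd_other _ _ _ hj, sup_apply']; exact le_sup_left
      · by_cases hj : j = k0
        · rw [hj, upd_self, upd_self, sup_apply']; exact le_sup_left
        · rw [upd_other _ _ _ hj, upd_other _ _ _ hj]; exact unitInterval.le_one'
    have : V C u (upd 1 k0 ((u ⊔ w) k0)) = B1f C u k0 w := by rw [B1f_val]; rfl
    linarith
  rw [QB]
  linarith

lemma dich1' (h : A1f C u k0 w < C u) : B1f C u k0 w = 0 := by
  by_cases hle : u k0 ≤ w k0
  · exfalso
    have : A1f C u k0 w = C u := by
      rw [A1f_val, inf_eq_right.mpr hle, upd_eq_self]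
    linarith
  · rw [B1f_val]
    refine Vdegen C (k := k0) ?_
    rw [upd_self, sup_eq_left.mpr (le_of_lt (not_le.mp hle))]

lemma dich2' (h : 0 < QA C u k0 w) : QB C u k0 w = V C u 1 := by
  by_cases hall : ∀ j, j ≠ k0 → w j < u j
  · rw [QB]
    have : upd (u ⊔ w) k0 (u k0) = u := by
      funext j
      by_cases hj : j = k0
      · rw [hj, upd_self]
      · rw [upd_other _ _ _ hj, sup_apply',
          sup_eq_left.mpr (le_of_lt (hall j hj))]
    rw [this]
  · exfalso
    push_neg at hall
    obtain ⟨j, hj, hle⟩ := hall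
    have : QA C u k0 w = 0 := by
      rw [QA]
      refine Vdegen C (k := j) ?_
      rw [upd_other _ _ _ hj, inf_apply', inf_eq_right.mpr hle]
    linarith

lemma key_ineq' (ha : 0 < C u) (hb : 0 < V C u 1) :
    (C u - A1f C u k0 w) * QB C u k0 w + (V C u 1 - B1f C u k0 w) * QA C u k0 w
      ≤ V C u 1 * V C (w ⊓ u) u + C u * V C (u ⊔ w) 1 := by
  have hVA0 : 0 ≤ V C (w ⊓ u) u := V_nonneg hC fun j => inf_le_right
  have hVB0 : 0 ≤ V C (u ⊔ w) 1 := V_nonneg hC fun j => unitInterval.le_one'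
  have hQA0 := QA_nonneg hC u k0 w
  have hQAa := QA_le hC u k0 w
  have hQB0 := QB_nonneg hC u k0 w
  have hQBb := QB_le hC u k0 w
  have hFA := frA' hC u k0 w
  have hFB := frB' hC u k0 w
  have hA1le := A1f_le hC u k0 w
  have hA1nn := A1f_nonneg hC u k0 w
  have hB1le := B1f_le hC u k0 w
  have hB1nn := B1f_nonneg hC u k0 w
  by_cases hp : A1f C u k0 w < C u
  · have hB1z := dich1' hC u k0 w hp
    by_cases hq : 0 < QA C u k0 w
    · have hQBb' := dich2' hC u k0 w hq
      rw [hB1z, hQBb']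
      have m1 : V C u 1 * (QA C u k0 w - A1f C u k0 w) ≤ V C u 1 * V C (w ⊓ u) u :=
        mul_le_mul_of_nonneg_left (by linarith) hb.le
      have m2 : C u * V C u 1 ≤ C u * V C (u ⊔ w) 1 := by
        refine mul_le_mul_of_nonneg_left ?_ ha.le
        rw [hB1z] at hFB
        linarith
      nlinarith [m1, m2]
    · have hQAz : QA C u k0 w = 0 := le_antisymm (not_lt.mp hq) hQA0
      rw [hB1z, hQAz]
      have hQBVB : QB C u k0 w ≤ V C (u ⊔ w) 1 := by
        rw [hB1z] at hFB; linarith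
      have m1 : (C u - A1f C u k0 w) * QB C u k0 w ≤ C u * QB C u k0 w :=
        mul_le_mul_of_nonneg_right (by linarith) hQB0
      have m2 : C u * QB C u k0 w ≤ C u * V C (u ⊔ w) 1 :=
        mul_le_mul_of_nonneg_left hQBVB ha.le
      nlinarith [mul_nonneg hb.le hVA0]
  · have hpz : A1f C u k0 w = C u := le_antisymm hA1le (not_lt.mp hp)
    by_cases hq : 0 < QA C u k0 w
    · have hQBb' := dich2' hC u k0 w hq
      rw [hpz, hQBb']
      have m1 : (V C u 1 - B1f C u k0 w) * QA C u k0 w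
          ≤ V C (u ⊔ w) 1 * QA C u k0 w :=
        mul_le_mul_of_nonneg_right (by linarith) hQA0
      have m2 : V C (u ⊔ w) 1 * QA C u k0 w ≤ V C (u ⊔ w) 1 * C u := by
        refine mul_le_mul_of_nonneg_left hQAa ?_
        linarith
      nlinarith [mul_nonneg hb.le hVA0]
    · have hQAz : QA C u k0 w = 0 := le_antisymm (not_lt.mp hq) hQA0
      rw [hpz, hQAz]
      nlinarith [mul_nonneg hb.le hVA0, mul_nonneg ha.le hVB0]

end Surv

lemma DD_surv_le (hC : IsCopula C) (u : Cube d) (k0 : Fin d)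
    (ha : 0 < C u) (hb : 0 < V C u 1) (t : Cube d) :
    survival (DDf C u k0) t ≤ survival C t := by
  rw [surv_eq, surv_eq]
  set w : Cube d := fun k => unitInterval.symm (t k) with hw
  rw [V_DD_expand, survVA hC u w, survVB hC u w, survP1 hC u k0 w, survP2 hC u k0 w]
  have hkey := key_ineq' hC u k0 w ha hb
  have heps := eps_nonneg hC u
  have hc3 : 0 ≤ epsf C u / (C u * V C u 1) :=
    div_nonneg heps (mul_pos ha hb).le
  have hm := mul_le_mul_of_nonneg_left hkey hc3
  have hid : epsf C u / (C u * V C u 1)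
      * (V C u 1 * V C (w ⊓ u) u + C u * V C (u ⊔ w) 1)
      = epsf C u / C u * V C (w ⊓ u) u + epsf C u / V C u 1 * V C (u ⊔ w) 1 := by
    field_simp
  rw [hid] at hm
  linarith

end Stmt8
namespace Stmt8

open Finset unitInterval

variable {d : ℕ} {C : Cube d → ℝ}

lemma not_both_pos (hd : 2 ≤ d) (hC : IsCopula C)
    (hmin : ∀ D : Cube d → ℝ, IsCopula D → ConcLE D C → D = C)
    (u : Cube d) (ha : 0 < C u) (hb : 0 < V C u 1) : False := by
  have h0 : 0 < d := by omega
  have h1 : 1 < d := by omega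
  set k0 : Fin d := ⟨0, h0⟩ with hk0def
  set k1 : Fin d := ⟨1, h1⟩ with hk1def
  have hk1 : k1 ≠ k0 := by
    rw [hk0def, hk1def]
    intro h
    exact absurd (congrArg Fin.val h) (by norm_num)
  have hcop : IsCopula (DDf C u k0) := by
    refine ⟨fun s t h => ?_, fun k x => DD_zero hC u k0 k x,
      fun k x => DD_margin hC u k0 ha hb k x⟩
    have := DD_boxpos hC u k0 ha hb h
    unfold V at this
    exact this
  have hconc : ConcLE (DDf C u k0) C :=
    ⟨fun t => DD_le_C hC u k0 ha hb t, fun t => DD_surv_le hC u k0 ha hb t⟩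
  have heq := hmin _ hcop hconc
  have hval := congrFun heq u
  rw [DD_at_u hC u k0 k1 hk1 ha hb] at hval
  have hepos : 0 < epsf C u := by
    rw [epsf]
    have := lt_min ha hb
    linarith
  linarith

lemma partA (hd : 2 ≤ d) (C : Cube d → ℝ) (hmin : IsMinimalCopula C) : IsTauCM C := by
  obtain ⟨hC, hm⟩ := hmin
  intro u _
  have hs : survival C (fun k => unitInterval.symm (u k)) = V C u 1 := by
    rw [surv_eq]
    congr 1
    funext k
    exact unitInterval.symm_symm (u k)
  rw [hs]
  have h1 : 0 ≤ C u := C_nonneg hC u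
  have h2 : 0 ≤ V C u 1 := V_nonneg hC (le_one_cube u)
  rcases lt_or_eq_of_le h1 with ha | ha
  · rcases lt_or_eq_of_le h2 with hb | hb
    · exact (not_both_pos hd hC hm u ha hb).elim
    · rw [← hb]
      exact min_eq_right h1
  · rw [← ha]
    exact min_eq_left h2

lemma tri (x : unitInterval) : x = 0 ∨ x = 1 ∨ (0 < x ∧ x < 1) := by
  rcases eq_or_lt_of_le (unitInterval.nonneg' (t := x)) with h | h
  · exact Or.inl h.symm
  · rcases eq_or_lt_of_le (unitInterval.le_one' (t := x)) with h1 | h1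
    · exact Or.inr (Or.inl h1)
    · exact Or.inr (Or.inr ⟨h, h1⟩)

section Dim2

variable {D : Cube 2 → ℝ}

lemma fin2_cases (j : Fin 2) (hj : j ≠ 1) : j = 0 := by
  fin_cases j
  · rfl
  · exact absurd rfl hj

lemma fin2_cases' (j : Fin 2) (hj : j ≠ 0) : j = 1 := by
  fin_cases j
  · exact absurd rfl hj
  · rfl

lemma two_sum (hD : IsCopula D) (t : Cube 2) :
    V D t 1 = 1 - (t 0 : ℝ) - (t 1 : ℝ) + D t := by
  have huniv : (univ : Finset (Fin 2)) = insert 0 {1} := by decide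
  have h01 : (0 : Fin 2) ∉ ({1} : Finset (Fin 2)) := by decide
  have h1e : (1 : Fin 2) ∉ (∅ : Finset (Fin 2)) := by decide
  have hsing : ({1} : Finset (Fin 2)) = insert 1 ∅ := by decide
  rw [V_eq_VS, huniv, VS_insert h01, hsing, VS_insert h1e, VS_insert h1e,
    VS_empty, VS_empty, VS_empty, VS_empty]
  have e1 : upd (upd t 0 ((1 : Cube 2) 0)) 1 ((1 : Cube 2) 1) = 1 := by
    funext j
    by_cases hj : j = 1
    · rw [hj, upd_self]
    · rw [upd_other _ _ _ hj, fin2_cases j hj, upd_self]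
  have hv1 : D (upd (upd t 0 ((1 : Cube 2) 0)) 1 ((1 : Cube 2) 1)) = 1 := by
    rw [e1]
    have := margin hD (w := (1 : Cube 2)) 0 (fun j _ => rfl)
    rw [this]
    rfl
  have hv2 : D (upd t 0 ((1 : Cube 2) 0)) = (t 1 : ℝ) := by
    have := margin hD (w := upd t 0 ((1 : Cube 2) 0)) 1 (fun j hj => by
      rw [fin2_cases j hj, upd_self]; rfl)
    rw [this, upd_other _ _ _ (by decide : (1 : Fin 2) ≠ 0)]
  have hv3 : D (upd t 1 ((1 : Cube 2) 1)) = (t 0 : ℝ) := by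
    have := margin hD (w := upd t 1 ((1 : Cube 2) 1)) 0 (fun j hj => by
      rw [fin2_cases' j hj, upd_self]; rfl)
    rw [this, upd_other _ _ _ (by decide : (0 : Fin 2) ≠ 1)]
  rw [hv1, hv2, hv3]
  ring

lemma frechetW (hD : IsCopula D) (t : Cube 2) :
    max ((t 0 : ℝ) + (t 1 : ℝ) - 1) 0 ≤ D t := by
  refine max_le ?_ (C_nonneg hD t)
  have h := V_nonneg hD (le_one_cube t)
  rw [two_sum hD t] at h
  linarith

lemma tauCM_eq_W (hD : IsCopula D) (hcm : IsTauCM D) (t : Cube 2) :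
    D t = max ((t 0 : ℝ) + (t 1 : ℝ) - 1) 0 := by
  have ht0 : (0 : ℝ) ≤ (t 0 : ℝ) := (t 0).2.1
  have ht0' : ((t 0 : ℝ)) ≤ 1 := (t 0).2.2
  have ht1 : (0 : ℝ) ≤ (t 1 : ℝ) := (t 1).2.1
  have ht1' : ((t 1 : ℝ)) ≤ 1 := (t 1).2.2
  rcases tri (t 0) with h0 | h0 | h0
  · have hc : (t 0 : ℝ) = 0 := by rw [h0]; rfl
    rw [czero hD h0, hc, max_eq_right (by linarith)]
  · have hc : (t 0 : ℝ) = 1 := by rw [h0]; rfl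
    have := margin hD (w := t) 1 (fun j hj => by rw [fin2_cases j hj]; exact h0)
    rw [this, hc, max_eq_left (by linarith)]
    ring
  · rcases tri (t 1) with h1 | h1 | h1
    · have hc : (t 1 : ℝ) = 0 := by rw [h1]; rfl
      rw [czero hD h1, hc, max_eq_right (by linarith)]
    · have hc : (t 1 : ℝ) = 1 := by rw [h1]; rfl
      have := margin hD (w := t) 0 (fun j hj => by rw [fin2_cases' j hj]; exact h1)
      rw [this, hc, max_eq_left (by linarith)]
      ring
    · have hint : ∀ k : Fin 2, 0 < t k ∧ t k < 1 := by
        intro k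
        fin_cases k
        · exact h0
        · exact h1
      have hcmt := hcm t hint
      have hs : survival D (fun k => unitInterval.symm (t k)) = V D t 1 := by
        rw [surv_eq]
        congr 1
        funext k
        exact unitInterval.symm_symm (t k)
      rw [hs, two_sum hD t] at hcmt
      have hfW := frechetW hD t
      rcases le_total ((t 0 : ℝ) + (t 1 : ℝ)) 1 with hc | hc
      · have hmax : max ((t 0 : ℝ) + (t 1 : ℝ) - 1) 0 = 0 :=
          max_eq_right (by linarith)
        rw [hmax]
        have hle : D t ≤ 1 - (t 0 : ℝ) - (t 1 : ℝ) + D t := by linarith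
        rw [min_eq_left hle] at hcmt
        exact hcmt
      · have hmax : max ((t 0 : ℝ) + (t 1 : ℝ) - 1) 0 = (t 0 : ℝ) + (t 1 : ℝ) - 1 :=
          max_eq_left (by linarith)
        rw [hmax]
        have hle : 1 - (t 0 : ℝ) - (t 1 : ℝ) + D t ≤ D t := by linarith
        rw [min_eq_right hle] at hcmt
        linarith

lemma partB_rev (hD : IsCopula D) (hcm : IsTauCM D) : IsMinimalCopula D := by
  refine ⟨hD, fun E hE hle => funext fun t => ?_⟩
  refine le_antisymm (hle.1 t) ?_
  rw [tauCM_eq_W hD hcm t]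
  exact frechetW hE t

end Dim2

end Stmt8


/-- Every minimal copula is Kendall-countermonotonic; for `d = 2` the two notions coincide. -/
theorem stmt8 (d : ℕ) (hd : 2 ≤ d) :
    (∀ C : Cube d → ℝ, IsMinimalCopula C → IsTauCM C) ∧
    (d = 2 → ∀ C : Cube d → ℝ, IsCopula C → (IsMinimalCopula C ↔ IsTauCM C)) := by
  constructor
  · exact fun C hmin => Stmt8.partA hd C hmin
  · intro hd2 C
    subst hd2
    intro hC
    exact ⟨fun hmin => Stmt8.partA hd C hmin, fun hcm => Stmt8.partB_rev hC hcm⟩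
end

section
/- Let d ≥ 4. Define C, D : [0,1]^2 × [0,1]^{d−2} → [0,1] by C(u,v) := max{u_1 + u_2 − 1, 0}·∏_{i=1}^{d−2} v_i and D(u,v) := max{u_1 + u_2 − 1, 0}·min{v_1,...,v_{d−2}}. Then C and D are d-dimensional copulas, D is Kendall-countermonotonic, and C ⪯ D with C ≠ D; in particular, D is a Kendall-countermonotonic copula that is not a minimal copula. -/
open MeasureTheory unitInterval

/-!
Both functions have the form `W(u₁, u₂) · B(v)` with the factors depending on complementary
blocks of coordinates, so every `d`-dimensional increment factors as the 2-dimensional increment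
of `W` times the `(d - 2)`-dimensional increment of `B = Π` resp. `B = M`; hence `C` and `D` are
copulas. Each factor is radially symmetric, so `τ C = C` and `τ D = D`: the concordance order
then reduces to `Π ≤ M`, and `τ`-countermonotonicity of `D` to `W(u₁, u₂) · W(1 - u₁, 1 - u₂) = 0`.
Finally `C ≠ D` at `(1, 1, 1/2, …, 1/2)` since `d - 2 ≥ 2`.
-/

section DependsOn

variable {ι β : Type*} [DecidableEq ι] {α : ι → Type*} {f : (Π i, α i) → β} {s : Set ι} {a : ι}

lemma DependsOn.comp_update (hf : DependsOn f (insert a s)) (x : α a) :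
    DependsOn (fun w => f (Function.update w a x)) s := by
  intro w w' h
  refine hf fun k hk => ?_
  by_cases hka : k = a
  · subst hka
    simp
  · simp only [Function.update_of_ne hka]
    exact h k (hk.resolve_left hka)

lemma DependsOn.apply_update (hf : DependsOn f s) (ha : a ∉ s) (w : Π i, α i) (x : α a) :
    f (Function.update w a x) = f w :=
  hf fun _ hk => Function.update_of_ne (ne_of_mem_of_not_mem hk ha) _ _

end DependsOn

namespace Copula

open Finset Function

variable {d : ℕ}

def boxSum (T : Finset (Fin d)) (F : Cube d → ℝ) (u v : Cube d) : ℝ :=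
  ∑ K ∈ T.powerset, (-1 : ℝ) ^ (T.card - K.card) * F (etaK K u v)

lemma boxSum_empty (F : Cube d → ℝ) (u v : Cube d) : boxSum ∅ F u v = F u := by
  have : etaK ∅ u v = u := by
    funext k
    simp [etaK]
  simp [boxSum, this]

lemma boxSum_insert {a : Fin d} {T : Finset (Fin d)} (ha : a ∉ T) (F : Cube d → ℝ)
    (u v : Cube d) :
    boxSum (insert a T) F u v =
      boxSum T (fun w => F (update w a (v a))) u v -
        boxSum T (fun w => F (update w a (u a))) u v := by
  rw [boxSum, sum_powerset_insert ha, boxSum, boxSum, add_comm, sub_eq_add_neg, ← sum_neg_distrib]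
  congr 1 <;> refine sum_congr rfl fun K hK => ?_
  all_goals
    have hKT : K ⊆ T := mem_powerset.1 hK
    have haK : a ∉ K := fun h => ha (hKT h)
    have hcard : K.card ≤ T.card := card_le_card hKT
    rw [card_insert_of_notMem ha]
  · rw [card_insert_of_notMem haK, Nat.add_sub_add_right]
    congr 2
    funext k
    by_cases hk : k = a <;> simp [etaK, hk]
  · rw [Nat.sub_add_comm hcard, pow_succ]
    have : etaK K u v = update (etaK K u v) a (u a) := by
      funext k
      by_cases hk : k = a <;> simp [etaK, hk, haK]
    rw [← this]
    ring

lemma boxSum_const_mul (T : Finset (Fin d)) (c : ℝ) (F : Cube d → ℝ) (u v : Cube d) :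
    boxSum T (fun w => c * F w) u v = c * boxSum T F u v := by
  simp only [boxSum, mul_sum]
  exact sum_congr rfl fun K _ => mul_left_comm _ _ _

lemma sum_eq_boxSum_univ (F : Cube d → ℝ) (u v : Cube d) :
    ∑ K : Finset (Fin d), (-1 : ℝ) ^ (d - K.card) * F (etaK K u v) = boxSum univ F u v := by
  simp [boxSum]

lemma survival_eq_boxSum (F : Cube d → ℝ) (u : Cube d) :
    survival F u = boxSum univ F (fun k => σ (u k)) 1 := by
  rw [survival, nuK, boxSum, powerset_univ, card_univ, Fintype.card_fin]
  refine Fintype.sum_bijective compl compl_involutive.bijective _ _ fun L => ?_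
  have hL : L.card ≤ d := by simpa using card_le_univ L
  congr 1
  · rw [card_compl, Fintype.card_fin, Nat.sub_sub_self hL]
  · congr 1
    funext k
    by_cases hk : k ∈ L <;> simp [etaK, hk]

lemma boxSum_mul {S T : Finset (Fin d)} (hST : Disjoint S T) {A B : Cube d → ℝ}
    (hA : DependsOn A S) (hB : DependsOn B T) (u v : Cube d) :
    boxSum (S ∪ T) (fun w => A w * B w) u v = boxSum S A u v * boxSum T B u v := by
  induction S using Finset.induction generalizing A with
  | empty =>
    have hAu : (fun w => A w * B w) = fun w => A u * B w := by
      funext w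
      rw [DependsOn.empty (f := A) (by simpa using hA) w u]
    rw [empty_union, boxSum_empty, hAu, boxSum_const_mul]
  | @insert a S ha ih =>
    have haT : a ∉ T := disjoint_left.1 hST (mem_insert_self a S)
    have hST' : Disjoint S T := disjoint_of_subset_left (subset_insert a S) hST
    have hA' : DependsOn A (insert a (S : Set (Fin d))) := by rwa [coe_insert] at hA
    simp only [insert_union, boxSum_insert (notMem_union.2 ⟨ha, haT⟩), boxSum_insert ha,
      hB.apply_update (mem_coe.not.2 haT), ih hST' (hA'.comp_update _)]
    ring

lemma boxSum_pair {i j : Fin d} (hij : i ≠ j) (f : ℝ → ℝ → ℝ) (u v : Cube d) :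
    boxSum {i, j} (fun w => f (w i) (w j)) u v =
      f (v i) (v j) - f (u i) (v j) - f (v i) (u j) + f (u i) (u j) := by
  rw [boxSum_insert (notMem_singleton.2 hij), ← insert_empty_eq, boxSum_insert (notMem_empty j),
    boxSum_insert (notMem_empty j)]
  simp only [boxSum_empty, update_self, update_of_ne hij.symm]
  ring

lemma boxSum_prod (T : Finset (Fin d)) (u v : Cube d) :
    boxSum T (fun w => ∏ k ∈ T, (w k : ℝ)) u v = ∏ k ∈ T, ((v k : ℝ) - u k) := by
  induction T using Finset.induction with
  | empty => simp [boxSum_empty]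
  | @insert a T ha ih =>
    have hupd : ∀ x : I, (fun w : Cube d => ∏ k ∈ insert a T, (update w a x k : ℝ)) =
        fun w => (x : ℝ) * ∏ k ∈ T, (w k : ℝ) := by
      intro x
      funext w
      rw [prod_insert ha, update_self]
      congr 1
      exact prod_congr rfl fun k hk => by rw [update_of_ne (ne_of_mem_of_not_mem hk ha)]
    rw [boxSum_insert ha, hupd, hupd, boxSum_const_mul, boxSum_const_mul, ih, prod_insert ha]
    ring

lemma fold_min_min_left {α β : Type*} [LinearOrder β] (s : Finset α) (f : α → β) (x c : β) :
    s.fold min (min x c) f = min x (s.fold min c f) :=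
  eq_of_forall_le_iff fun y => by simp only [le_fold_min, le_min_iff, and_assoc]

lemma max_sub_max_of_le {a b m M : ℝ} (hab : a ≤ b) :
    max (min b m - M) 0 - max (min a m - M) 0 = max (min b m - max a M) 0 := by
  simp only [min_def, max_def]
  split_ifs <;> linarith

lemma boxSum_fold_min (T : Finset (Fin d)) {c : ℝ} (hc : 0 ≤ c) {u v : Cube d} (huv : u ≤ v) :
    boxSum T (fun w => T.fold min c fun k => (w k : ℝ)) u v =
      max ((T.fold min c fun k => (v k : ℝ)) - T.fold max 0 fun k => (u k : ℝ)) 0 := by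
  -- inserting a coordinate `a` absorbs `u a` resp. `v a` into the initial value `c`
  induction T using Finset.induction generalizing c with
  | empty => simp [boxSum_empty, hc]
  | @insert a T ha ih =>
    have hupd : ∀ x : I, (fun w : Cube d => (insert a T).fold min c fun k => (update w a x k : ℝ)) =
        fun w => T.fold min (min (x : ℝ) c) fun k => (w k : ℝ) := by
      intro x
      funext w
      rw [fold_insert ha, update_self, fold_min_min_left]
      congr 1
      exact fold_congr fun k hk => by rw [update_of_ne (ne_of_mem_of_not_mem hk ha)]
    rw [boxSum_insert ha, hupd, hupd, ih (le_min (v a).2.1 hc), ih (le_min (u a).2.1 hc),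
      fold_min_min_left, fold_min_min_left, max_sub_max_of_le (huv a), fold_insert ha,
      fold_insert ha]

structure IsCopulaOn (S : Finset (Fin d)) (F : Cube d → ℝ) : Prop where
  dependsOn : DependsOn F S
  boxSum_nonneg : ∀ u v : Cube d, u ≤ v → 0 ≤ boxSum S F u v
  apply_etaK_zero : ∀ k ∈ S, ∀ u : Cube d, F (etaK {k} u 0) = 0
  apply_etaK_one : ∀ k u, F (etaK {k} 1 u) = if k ∈ S then (u k : ℝ) else 1

lemma IsCopulaOn.isCopula {F : Cube d → ℝ} (hF : IsCopulaOn univ F) : IsCopula F :=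
  ⟨fun u v huv => sum_eq_boxSum_univ F u v ▸ hF.boxSum_nonneg u v huv,
    fun k => hF.apply_etaK_zero k (mem_univ k),
    fun k u => by simpa using hF.apply_etaK_one k u⟩

lemma IsCopulaOn.mul {S T : Finset (Fin d)} (hST : Disjoint S T) {A B : Cube d → ℝ}
    (hA : IsCopulaOn S A) (hB : IsCopulaOn T B) : IsCopulaOn (S ∪ T) (fun w => A w * B w) where
  dependsOn w w' h := by
    dsimp only
    rw [hA.dependsOn fun k hk => h k (by simp [Finset.mem_coe.1 hk]),
      hB.dependsOn fun k hk => h k (by simp [Finset.mem_coe.1 hk])]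
  boxSum_nonneg u v huv := by
    rw [boxSum_mul hST hA.dependsOn hB.dependsOn]
    exact mul_nonneg (hA.boxSum_nonneg u v huv) (hB.boxSum_nonneg u v huv)
  apply_etaK_zero k hk u := by
    rcases mem_union.1 hk with hkS | hkT
    · rw [hA.apply_etaK_zero k hkS, zero_mul]
    · rw [hB.apply_etaK_zero k hkT, mul_zero]
  apply_etaK_one k u := by
    rw [hA.apply_etaK_one, hB.apply_etaK_one]
    by_cases hkS : k ∈ S
    · simp [hkS, disjoint_left.1 hST hkS]
    · by_cases hkT : k ∈ T <;> simp [hkS, hkT]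

def IsRadiallySymmetricOn (S : Finset (Fin d)) (F : Cube d → ℝ) : Prop :=
  ∀ u : Cube d, boxSum S F (fun k => σ (u k)) 1 = F u

lemma IsRadiallySymmetricOn.mul {S T : Finset (Fin d)} (hST : Disjoint S T) {A B : Cube d → ℝ}
    (hA : DependsOn A S) (hB : DependsOn B T) (hAs : IsRadiallySymmetricOn S A)
    (hBs : IsRadiallySymmetricOn T B) : IsRadiallySymmetricOn (S ∪ T) (fun w => A w * B w) :=
  fun u => by rw [boxSum_mul hST hA hB, hAs, hBs]

lemma IsRadiallySymmetricOn.survival_eq {F : Cube d → ℝ} (hF : IsRadiallySymmetricOn univ F) :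
    survival F = F :=
  funext fun u => (survival_eq_boxSum F u).trans (hF u)

section Blocks

variable {i j : Fin d}

def frechetLower (a b : ℝ) : ℝ := max (a + b - 1) 0

lemma frechetLower_nonneg (a b : ℝ) : 0 ≤ frechetLower a b := le_max_right _ _

lemma frechetLower_eq_zero_or (a b : ℝ) :
    frechetLower a b = 0 ∨ frechetLower (1 - a) (1 - b) = 0 := by
  simp only [frechetLower, max_eq_right_iff]
  by_contra! h
  linarith [h.1, h.2]

lemma isCopulaOn_frechetLower (hij : i ≠ j) :
    IsCopulaOn {i, j} (fun w => frechetLower (w i) (w j)) where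
  dependsOn w w' h := by
    dsimp only
    rw [h i (by simp), h j (by simp)]
  boxSum_nonneg u v huv := by
    have hi : (u i : ℝ) ≤ v i := huv i
    have hj : (u j : ℝ) ≤ v j := huv j
    rw [boxSum_pair hij]
    simp only [frechetLower, max_def]
    split_ifs <;> linarith
  apply_etaK_zero k hk u := by
    rcases mem_insert.1 hk with rfl | hkj
    · simp [etaK, frechetLower, hij.symm, (u j).2.2]
    · rw [mem_singleton.1 hkj]
      simp [etaK, frechetLower, hij, (u i).2.2]
  apply_etaK_one k u := by
    by_cases hki : k = i
    · subst hki
      simp [etaK, frechetLower, hij, hij.symm, (u k).2.1]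
    · by_cases hkj : k = j
      · subst hkj
        simp [etaK, frechetLower, hki, Ne.symm hki, (u k).2.1]
      · simp [etaK, frechetLower, hki, hkj, Ne.symm hki, Ne.symm hkj]

lemma isRadiallySymmetricOn_frechetLower (hij : i ≠ j) :
    IsRadiallySymmetricOn {i, j} (fun w => frechetLower (w i) (w j)) := by
  intro u
  obtain ⟨hi₀, hi₁⟩ := (u i).2
  obtain ⟨hj₀, hj₁⟩ := (u j).2
  rw [boxSum_pair hij]
  simp only [Pi.one_apply, Set.Icc.coe_one, coe_symm_eq, frechetLower, max_def]
  split_ifs <;> linarith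

lemma isCopulaOn_prod (T : Finset (Fin d)) : IsCopulaOn T (fun w => ∏ k ∈ T, (w k : ℝ)) where
  dependsOn w w' h := prod_congr rfl fun k hk => by rw [h k hk]
  boxSum_nonneg u v huv := by
    rw [boxSum_prod]
    exact prod_nonneg fun k _ => sub_nonneg.2 (huv k)
  apply_etaK_zero k hk u := prod_eq_zero hk (by simp [etaK])
  apply_etaK_one k u := by
    split_ifs with hk
    · rw [prod_eq_single_of_mem k hk fun j _ hjk => by simp [etaK, hjk]]
      simp [etaK]
    · exact prod_eq_one fun j hj => by simp [etaK, ne_of_mem_of_not_mem hj hk]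

lemma isRadiallySymmetricOn_prod (T : Finset (Fin d)) :
    IsRadiallySymmetricOn T (fun w => ∏ k ∈ T, (w k : ℝ)) := by
  intro u
  rw [boxSum_prod]
  exact prod_congr rfl fun k _ => by simp [coe_symm_eq]

lemma isCopulaOn_fold_min (T : Finset (Fin d)) :
    IsCopulaOn T (fun w => T.fold min 1 fun k => (w k : ℝ)) where
  dependsOn w w' h := fold_congr fun k hk => by rw [h k hk]
  boxSum_nonneg u v huv := by
    rw [boxSum_fold_min T zero_le_one huv]
    exact le_max_right _ _
  apply_etaK_zero k hk u := by
    refine le_antisymm ((fold_min_le _).2 (Or.inr ⟨k, hk, by simp [etaK]⟩)) ?_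
    exact (le_fold_min _).2 ⟨zero_le_one, fun j _ => (etaK {k} u 0 j).2.1⟩
  apply_etaK_one k u := by
    split_ifs with hk
    · refine le_antisymm ((fold_min_le _).2 (Or.inr ⟨k, hk, by simp [etaK]⟩)) ?_
      refine (le_fold_min _).2 ⟨(u k).2.2, fun j _ => ?_⟩
      by_cases hjk : j = k
      · simp [etaK, hjk]
      · simp [etaK, hjk, (u k).2.2]
    · refine le_antisymm ((fold_min_le _).2 (Or.inl le_rfl))
        ((le_fold_min _).2 ⟨le_rfl, fun j hj => ?_⟩)
      simp [etaK, ne_of_mem_of_not_mem hj hk]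

lemma fold_max_symm (T : Finset (Fin d)) (u : Cube d) :
    (T.fold max 0 fun k => (σ (u k) : ℝ)) = 1 - T.fold min 1 fun k => (u k : ℝ) := by
  refine eq_of_forall_ge_iff fun y => ?_
  simp only [fold_max_le, coe_symm_eq]
  rw [sub_le_comm, le_fold_min]
  constructor <;> rintro ⟨hy, h⟩ <;> exact ⟨by linarith, fun k hk => by linarith [h k hk]⟩

lemma isRadiallySymmetricOn_fold_min (T : Finset (Fin d)) :
    IsRadiallySymmetricOn T (fun w => T.fold min 1 fun k => (w k : ℝ)) := by
  intro u
  have hone : (T.fold min 1 fun k => ((1 : Cube d) k : ℝ)) = 1 :=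
    le_antisymm ((fold_min_le _).2 (Or.inl le_rfl)) ((le_fold_min _).2 ⟨le_rfl, fun _ _ => le_rfl⟩)
  rw [boxSum_fold_min T zero_le_one (v := 1) fun k => le_one', hone, fold_max_symm, sub_sub_cancel,
    max_eq_left ((le_fold_min _).2 ⟨zero_le_one, fun k _ => (u k).2.1⟩)]

end Blocks

lemma prod_le_fold_min (T : Finset (Fin d)) (w : Cube d) :
    ∏ k ∈ T, (w k : ℝ) ≤ T.fold min 1 fun k => (w k : ℝ) := by
  have h0 : ∀ k ∈ T, 0 ≤ (w k : ℝ) := fun k _ => (w k).2.1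
  have h1 : ∀ k ∈ T, (w k : ℝ) ≤ 1 := fun k _ => (w k).2.2
  refine (le_fold_min _).2 ⟨prod_le_one h0 h1, fun k hk => ?_⟩
  rw [← mul_prod_erase T _ hk]
  exact mul_le_of_le_one_right (h0 k hk)
    (prod_le_one (fun l hl => h0 l (mem_of_mem_erase hl)) fun l hl => h1 l (mem_of_mem_erase hl))

section FrechetProducts

variable {i j : Fin d}

def frechetProd (i j : Fin d) (w : Cube d) : ℝ :=
  frechetLower (w i) (w j) * ∏ k ∈ ({i, j}ᶜ : Finset (Fin d)), (w k : ℝ)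

noncomputable def frechetMin (i j : Fin d) (w : Cube d) : ℝ :=
  frechetLower (w i) (w j) * ({i, j}ᶜ : Finset (Fin d)).fold min 1 fun k => (w k : ℝ)

lemma isCopula_frechetProd (hij : i ≠ j) : IsCopula (frechetProd i j) := by
  have := (isCopulaOn_frechetLower hij).mul disjoint_compl_right (isCopulaOn_prod _)
  rw [union_compl] at this
  exact this.isCopula

lemma isCopula_frechetMin (hij : i ≠ j) : IsCopula (frechetMin i j) := by
  have := (isCopulaOn_frechetLower hij).mul disjoint_compl_right (isCopulaOn_fold_min _)
  rw [union_compl] at this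
  exact this.isCopula

lemma survival_frechetProd (hij : i ≠ j) : survival (frechetProd i j) = frechetProd i j := by
  have := (isRadiallySymmetricOn_frechetLower hij).mul disjoint_compl_right
    (isCopulaOn_frechetLower hij).dependsOn (isCopulaOn_prod _).dependsOn
    (isRadiallySymmetricOn_prod _)
  rw [union_compl] at this
  exact this.survival_eq

lemma survival_frechetMin (hij : i ≠ j) : survival (frechetMin i j) = frechetMin i j := by
  have := (isRadiallySymmetricOn_frechetLower hij).mul disjoint_compl_right
    (isCopulaOn_frechetLower hij).dependsOn (isCopulaOn_fold_min _).dependsOn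
    (isRadiallySymmetricOn_fold_min _)
  rw [union_compl] at this
  exact this.survival_eq

lemma frechetProd_le_frechetMin (w : Cube d) : frechetProd i j w ≤ frechetMin i j w :=
  mul_le_mul_of_nonneg_left (prod_le_fold_min _ w) (frechetLower_nonneg _ _)

lemma concLE_frechetProd_frechetMin (hij : i ≠ j) : ConcLE (frechetProd i j) (frechetMin i j) :=
  ⟨frechetProd_le_frechetMin, by
    rw [survival_frechetProd hij, survival_frechetMin hij]
    exact frechetProd_le_frechetMin⟩

lemma frechetMin_nonneg (w : Cube d) : 0 ≤ frechetMin i j w :=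
  mul_nonneg (frechetLower_nonneg _ _) ((le_fold_min _).2 ⟨zero_le_one, fun k _ => (w k).2.1⟩)

lemma isTauCM_frechetMin (hij : i ≠ j) : IsTauCM (frechetMin i j) := by
  intro u _
  rw [survival_frechetMin hij]
  rcases frechetLower_eq_zero_or (u i) (u j) with h | h
  · have hu : frechetMin i j u = 0 := by rw [frechetMin, h, zero_mul]
    rw [hu, min_eq_left (frechetMin_nonneg _)]
  · have hσu : frechetMin i j (fun k => σ (u k)) = 0 := by
      rw [frechetMin, coe_symm_eq, coe_symm_eq, h, zero_mul]
    rw [hσu, min_eq_right (frechetMin_nonneg _)]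

lemma frechetProd_ne_frechetMin (hij : i ≠ j) (hd : 4 ≤ d) : frechetProd i j ≠ frechetMin i j := by
  set T : Finset (Fin d) := {i, j}ᶜ
  have hT : 2 ≤ #T := by
    rw [card_compl, Fintype.card_fin, card_pair hij]
    omega
  obtain ⟨k₀, hk₀⟩ : T.Nonempty := card_pos.1 (by omega)
  let w : Cube d := fun k => if k ∈ T then ⟨1 / 2, by norm_num, by norm_num⟩ else 1
  have hwT : ∀ k ∈ T, (w k : ℝ) = 1 / 2 := fun k hk => by simp [w, hk]
  have hw : (w i : ℝ) = 1 ∧ (w j : ℝ) = 1 := by simp [w, T]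
  have hprod : frechetProd i j w = (1 / 2) ^ #T := by
    rw [frechetProd, hw.1, hw.2, prod_congr rfl hwT, prod_const]
    norm_num [frechetLower]
  have hmin : frechetMin i j w = 1 / 2 := by
    have : (T.fold min 1 fun k => (w k : ℝ)) = 1 / 2 :=
      le_antisymm ((fold_min_le _).2 (Or.inr ⟨k₀, hk₀, (hwT k₀ hk₀).le⟩))
        ((le_fold_min _).2 ⟨by norm_num, fun k hk => (hwT k hk).ge⟩)
    rw [frechetMin, hw.1, hw.2, this]
    norm_num [frechetLower]
  intro h
  have := congrFun h w
  rw [hprod, hmin] at this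
  exact (pow_lt_self_of_lt_one₀ (by norm_num) (by norm_num) hT).ne this

end FrechetProducts

section CoordinateBlocks

variable {n : ℕ}

lemma image_cast_natAdd (h : 2 + n = d) :
    univ.image (fun j : Fin n => Fin.cast h (Fin.natAdd 2 j)) =
      ({⟨0, by omega⟩, ⟨1, by omega⟩} : Finset (Fin d))ᶜ := by
  ext k
  simp only [mem_image, mem_univ, true_and, mem_compl, mem_insert, mem_singleton, Fin.ext_iff,
    Fin.val_cast, Fin.val_natAdd]
  constructor
  · rintro ⟨j, hj⟩
    omega
  · intro hk
    exact ⟨⟨k - 2, by omega⟩, by simp only; omega⟩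

lemma cast_natAdd_injective (h : 2 + n = d) :
    Injective fun j : Fin n => Fin.cast h (Fin.natAdd 2 j) :=
  (Fin.cast_injective h).comp (Fin.natAdd_injective n 2)

lemma prod_cast_natAdd (h : 2 + n = d) (w : Cube d) :
    ∏ j : Fin n, (w (Fin.cast h (Fin.natAdd 2 j)) : ℝ) =
      ∏ k ∈ ({⟨0, by omega⟩, ⟨1, by omega⟩} : Finset (Fin d))ᶜ, (w k : ℝ) := by
  rw [← image_cast_natAdd h, prod_image fun a _ b _ hab => cast_natAdd_injective h hab]

lemma csInf_range_eq_fold_min {ι : Type*} [Fintype ι] [Nonempty ι] {f : ι → ℝ} {c : ℝ}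
    (hf : ∀ i, f i ≤ c) : sInf (Set.range f) = univ.fold min c f := by
  refine eq_of_forall_le_iff fun y => ?_
  rw [le_fold_min]
  change y ≤ iInf f ↔ _
  rw [le_ciInf_iff (Set.finite_range f).bddBelow]
  exact ⟨fun hy => ⟨(hy (Classical.arbitrary ι)).trans (hf _), fun i _ => hy i⟩,
    fun hy i => hy.2 i (mem_univ i)⟩

lemma csInf_range_cast_natAdd (h : 2 + n = d) (hn : 0 < n) (w : Cube d) :
    sInf (Set.range fun j : Fin n => (w (Fin.cast h (Fin.natAdd 2 j)) : ℝ)) =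
      ({⟨0, by omega⟩, ⟨1, by omega⟩} : Finset (Fin d))ᶜ.fold min 1 fun k => (w k : ℝ) := by
  have : Nonempty (Fin n) := ⟨⟨0, hn⟩⟩
  rw [csInf_range_eq_fold_min fun j => (w _).2.2, ← image_cast_natAdd h,
    fold_image fun a _ b _ hab => cast_natAdd_injective h hab]
  rfl

end CoordinateBlocks

end Copula

open Copula

/-- For `d ≥ 4`, `C(u,v) = W(u₁,u₂)·∏ vᵢ` and `D(u,v) = W(u₁,u₂)·min vᵢ` are copulas, `D` is
Kendall-countermonotonic, and `C ⪯ D` with `C ≠ D`; in particular `D` is a `τ`-CM copula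
which is not minimal. -/
theorem stmt9 (d : ℕ) (hd : 4 ≤ d)
    (C D : Cube d → ℝ)
    (hC : ∀ u : Cube d, C u =
      max ((u ⟨0, by omega⟩ : ℝ) + (u ⟨1, by omega⟩ : ℝ) - 1) 0 *
      ∏ j : Fin (d - 2), (u (Fin.cast (by omega) (Fin.natAdd 2 j)) : ℝ))
    (hD : ∀ u : Cube d, D u =
      max ((u ⟨0, by omega⟩ : ℝ) + (u ⟨1, by omega⟩ : ℝ) - 1) 0 *
      sInf (Set.range fun j : Fin (d - 2) => (u (Fin.cast (by omega) (Fin.natAdd 2 j)) : ℝ))) :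
    IsCopula C ∧ IsCopula D ∧ IsTauCM D ∧ ConcLE C D ∧ C ≠ D ∧ ¬ IsMinimalCopula D := by
  have hij : (⟨0, by omega⟩ : Fin d) ≠ ⟨1, by omega⟩ := by simp [Fin.ext_iff]
  obtain rfl : C = frechetProd _ _ := funext fun u => by
    rw [hC, prod_cast_natAdd]
    rfl
  obtain rfl : D = frechetMin _ _ := funext fun u => by
    rw [hD, csInf_range_cast_natAdd _ (by omega)]
    rfl
  have hCD := concLE_frechetProd_frechetMin hij
  have hne := frechetProd_ne_frechetMin hij hd
  exact ⟨isCopula_frechetProd hij, isCopula_frechetMin hij, isTauCM_frechetMin hij, hCD, hne,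
    fun hmin => hne (hmin.2 _ (isCopula_frechetProd hij) hCD)⟩
end

section
/- For every K ⊆ {1,...,d} with 2 ≤ |K| ≤ d, every K-countermonotonic copula is Kendall-countermonotonic: 𝒞_{K-CM} ⊆ 𝒞_{τ-CM}. -/
/-!
Let `μ` be the copula measure of `C`, carried by `H = {a | ∑_{k ∈ K} g_k (a_k) = c}`.
`C u` is the `μ`-mass of the box `[0, u]`, and inclusion–exclusion over the coordinates shows
that `(τ C)(1 - u)` is the mass of the open upper orthant `{a | u < a}`. A set of positive mass
meets `H`, so if both masses were positive we would get `a ≤ u < b` on `H`; since the `g_k` are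
strictly increasing and `K ≠ ∅`, `∑ g_k (a_k) < ∑ g_k (b_k)`, contradicting `a, b ∈ H`.
-/

open MeasureTheory unitInterval

theorem MeasureTheory.measureReal_biInter_compl_eq_sum_powerset {α ι : Type*}
    [MeasurableSpace α] [DecidableEq ι] {A : ι → Set α} (hA : ∀ i, MeasurableSet (A i))
    (s : Finset ι) (μ : Measure α) [IsFiniteMeasure μ] :
    μ.real (⋂ i ∈ s, (A i)ᶜ) = ∑ L ∈ s.powerset, (-1 : ℝ) ^ L.card * μ.real (⋂ i ∈ L, A i) := by
  induction s using Finset.induction_on generalizing μ with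
  | empty => simp
  | insert a s ha ih =>
    have hInter : ∀ L : Finset ι, MeasurableSet (⋂ i ∈ L, A i) := fun L =>
      .biInter L.countable_toSet fun i _ => hA i
    have hInterCompl : MeasurableSet (⋂ i ∈ s, (A i)ᶜ) :=
      .biInter s.countable_toSet fun i _ => (hA i).compl
    have hnew : ∑ L ∈ s.powerset, (-1 : ℝ) ^ (insert a L).card * μ.real (⋂ i ∈ insert a L, A i)
        = -∑ L ∈ s.powerset, (-1 : ℝ) ^ L.card * (μ.restrict (A a)).real (⋂ i ∈ L, A i) := by
      rw [← Finset.sum_neg_distrib]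
      refine Finset.sum_congr rfl fun L hL => ?_
      have haL : a ∉ L := fun h => ha (Finset.mem_powerset.mp hL h)
      rw [Finset.card_insert_of_notMem haL, measureReal_restrict_apply (hInter L),
        Finset.set_biInter_insert, Set.inter_comm, pow_succ]
      ring
    rw [Finset.sum_powerset_insert ha, hnew, ← ih μ, ← ih (μ.restrict (A a)),
      measureReal_restrict_apply hInterCompl, Finset.set_biInter_insert, Set.inter_comm,
      ← Set.sdiff_eq, ← measureReal_inter_add_sdiff (s := ⋂ i ∈ s, (A i)ᶜ) (hA a)]
    ring

namespace IsCopula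

variable {d : ℕ} {C : Cube d → ℝ}

theorem apply_eq_zero_of_exists_eq_zero (hC : IsCopula C) {w : Cube d} (hw : ∃ k, w k = 0) :
    C w = 0 := by
  obtain ⟨k, hk⟩ := hw
  have hw : etaK {k} w 0 = w := by
    funext j
    by_cases h : j = k <;> simp [etaK, h, hk]
  rw [← hw, hC.2.1 k w]

theorem nonneg (hC : IsCopula C) (w : Cube d) : 0 ≤ C w := by
  have h := hC.1 0 w fun _ => unitInterval.nonneg'
  rw [Finset.sum_eq_single Finset.univ (fun L _ hL => ?_) (by simp)] at h
  · have hw : etaK Finset.univ 0 w = w := by funext k; simp [etaK]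
    simpa [hw] using h
  · obtain ⟨k, hk⟩ : ∃ k, k ∉ L := by simpa [Finset.eq_univ_iff_forall] using hL
    rw [hC.apply_eq_zero_of_exists_eq_zero ⟨k, by simp [etaK, hk]⟩, mul_zero]

end IsCopula

namespace IsCopulaMeasure

variable {d : ℕ} {C : Cube d → ℝ} {μ : Measure (Cube d)}

theorem apply_eq_measureReal (hμ : IsCopulaMeasure C μ) (hC : IsCopula C) (w : Cube d) :
    C w = μ.real (Set.Icc 0 w) := by
  rw [measureReal_def, hμ.2 w, ENNReal.toReal_ofReal (hC.nonneg w)]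

theorem survival_symm_eq_measureReal (hμ : IsCopulaMeasure C μ) (hC : IsCopula C)
    (u : Cube d) :
    survival C (fun k => σ (u k)) = μ.real (Set.univ.pi fun k => Set.Ioi (u k)) := by
  classical
  have := hμ.1
  set A : Fin d → Set (Cube d) := fun k => Function.eval k ⁻¹' Set.Iic (u k)
  have hpi :
      (Set.univ.pi fun k => Set.Ioi (u k)) = ⋂ k ∈ (Finset.univ : Finset (Fin d)), (A k)ᶜ := by
    ext a; simp [A]
  have hbox (L : Finset (Fin d)) :
      ⋂ k ∈ L, A k = Set.Icc 0 (fun k => if k ∈ L then u k else 1) := by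
    ext a
    simp only [A, Set.mem_iInter, Set.mem_preimage, Function.eval, Set.mem_Iic, Set.mem_Icc,
      Pi.le_def]
    refine ⟨fun h => ⟨fun _ => unitInterval.nonneg', fun k => ?_⟩, fun h k hk => by
      simpa [hk] using h.2 k⟩
    split_ifs with hk
    exacts [h k hk, unitInterval.le_one']
  rw [hpi, measureReal_biInter_compl_eq_sum_powerset
    (fun k => measurableSet_Iic.preimage (measurable_pi_apply k))]
  simp only [survival, nuK]
  refine Finset.sum_congr rfl fun L _ => ?_
  rw [hbox, ← hμ.apply_eq_measureReal hC]
  simp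

end IsCopulaMeasure

theorem MeasureTheory.nonempty_inter_of_measure_ne_zero_of_measure_eq_one {α : Type*}
    [MeasurableSpace α] {μ : Measure α} [IsProbabilityMeasure μ] {s t : Set α}
    (hs : MeasurableSet s) (hs₀ : μ s ≠ 0) (ht : μ t = 1) : (s ∩ t).Nonempty :=
  nonempty_inter_of_measure_lt_add' μ hs (Set.subset_univ s) (Set.subset_univ t) <| by
    rw [measure_univ, ht, add_comm]
    exact ENNReal.lt_add_right ENNReal.one_ne_top hs₀

theorem measure_pi_Iic_eq_zero_or_measure_pi_Ioi_eq_zero {ι α : Type*} [Countable ι]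
    [LinearOrder α] [TopologicalSpace α] [OrderClosedTopology α] [MeasurableSpace α]
    [OpensMeasurableSpace α] {K : Finset ι} (hK : K.Nonempty) {g : ι → α → ℝ}
    (hg : ∀ k ∈ K, StrictMono (g k)) {c : ℝ} {μ : Measure (ι → α)} [IsProbabilityMeasure μ]
    (hμ : μ {a | ∑ k ∈ K, g k (a k) = c} = 1) (u : ι → α) :
    μ (Set.univ.pi fun k => Set.Iic (u k)) = 0 ∨ μ (Set.univ.pi fun k => Set.Ioi (u k)) = 0 := by
  by_contra! h
  obtain ⟨a, ha, haH⟩ := nonempty_inter_of_measure_ne_zero_of_measure_eq_one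
    (.univ_pi fun _ => measurableSet_Iic) h.1 hμ
  obtain ⟨b, hb, hbH⟩ := nonempty_inter_of_measure_ne_zero_of_measure_eq_one
    (.univ_pi fun _ => measurableSet_Ioi) h.2 hμ
  have hlt : ∑ k ∈ K, g k (a k) < ∑ k ∈ K, g k (b k) :=
    Finset.sum_lt_sum_of_nonempty hK fun k hk =>
      hg k hk ((ha k trivial).trans_lt (hb k trivial))
  exact hlt.ne (haH.trans hbH.symm)

theorem stmt10_general (d : ℕ) (K : Finset (Fin d)) (hK : 2 ≤ K.card)
    (C : Cube d → ℝ) (hC : IsCopula C) (hCM : IsKCM K C) :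
    IsTauCM C := by
  obtain ⟨g, c, hg, μ, hμ, hH⟩ := hCM
  have := hμ.1
  intro u _
  have hIcc : Set.Icc 0 u = Set.univ.pi fun k => Set.Iic (u k) := by
    ext a; simp [Pi.le_def]
  rw [hμ.apply_eq_measureReal hC, hμ.survival_symm_eq_measureReal hC, hIcc]
  rcases measure_pi_Iic_eq_zero_or_measure_pi_Ioi_eq_zero (Finset.card_pos.mp (by omega))
    (fun k hk => (hg k hk).1) hH u with h | h
  · rw [(measureReal_eq_zero_iff).2 h]
    exact min_eq_left measureReal_nonneg
  · rw [(measureReal_eq_zero_iff).2 h]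
    exact min_eq_right measureReal_nonneg

/-- Every `K`-countermonotonic copula (`2 ≤ |K| ≤ d`) is Kendall-countermonotonic. -/
theorem stmt10 (d : ℕ) (hd : 2 ≤ d) (K : Finset (Fin d)) (hK : 2 ≤ K.card)
    (C : Cube d → ℝ) (hC : IsCopula C) (hCM : IsKCM K C) :
    IsTauCM C :=
  stmt10_general d K hK C hC hCM
end
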